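/- arXiv:2210.17480 — 3 statements merged into one kernel-verified Lean document; each statement's English description precedes it below -/
import Mathlib

section
/- Let (X,d) be a proper geodesic Gromov hyperbolic metric space and f : X → X an elliptic non-expanding map with limit retract ω_f. Then a boundary regular fixed point η of f has stable dilation Λ_η = 1 if and only if η is contained in the closure of ω_f in the Gromov compactification X̄^G. -/
/- Preliminary definitions: Gromov hyperbolicity, Gromov boundary (via geodesic rays),
   dilations, boundary regular fixed points, horofunctions, backward orbits. -/

noncomputable section

open Filter Topology Metric Set

/-- The Gromov product of `x` and `y` with respect to the base point `p`. -/
def gromovProd {X : Type*} [MetricSpace X] (p x y : X) : ℝ :=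
  (dist p x + dist p y - dist x y) / 2

/-- A (unit speed) geodesic ray, parametrized by `t ≥ 0`. -/
def IsGeodesicRay {X : Type*} [MetricSpace X] (γ : ℝ → X) : Prop :=
  ∀ s t : ℝ, 0 ≤ s → 0 ≤ t → dist (γ s) (γ t) = |s - t|

/-- A (unit speed) geodesic segment from `x` to `y`, parametrized on `[0, dist x y]`. -/
def IsGeodesicFromTo {X : Type*} [MetricSpace X] (γ : ℝ → X) (x y : X) : Prop :=
  γ 0 = x ∧ γ (dist x y) = y ∧
    ∀ s t : ℝ, s ∈ Set.Icc 0 (dist x y) → t ∈ Set.Icc 0 (dist x y) →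
      dist (γ s) (γ t) = |s - t|

/-- A geodesic metric space: any two points are joined by a geodesic. -/
def IsGeodesicSpace (X : Type*) [MetricSpace X] : Prop :=
  ∀ x y : X, ∃ γ : ℝ → X, IsGeodesicFromTo γ x y

/-- `δ`-hyperbolicity via slim triangles: every side of every geodesic triangle is contained
in the `δ`-neighborhood of the union of the other two sides. -/
def IsDeltaHyperbolic (X : Type*) [MetricSpace X] (δ : ℝ) : Prop :=
  ∀ x y z : X, ∀ α β γ : ℝ → X,
    IsGeodesicFromTo α x y → IsGeodesicFromTo β y z → IsGeodesicFromTo γ x z →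
    ∀ t ∈ Set.Icc (0 : ℝ) (dist x z),
      ∃ u ∈ α '' Set.Icc 0 (dist x y) ∪ β '' Set.Icc 0 (dist y z), dist (γ t) u ≤ δ

/-- A Gromov hyperbolic space: `δ`-hyperbolic for some `δ ≥ 0`. -/
def GromovHyperbolic (X : Type*) [MetricSpace X] : Prop :=
  ∃ δ : ℝ, 0 ≤ δ ∧ IsDeltaHyperbolic X δ

/-- The trace on `X` of the filter of neighborhoods, in the Gromov compactification, of the
boundary point determined by the geodesic ray `γ`: a sequence (or a function) converges to
the boundary point `[γ]` iff its Gromov products with points far along `γ` tend to `+∞`. -/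
def gromovFilter {X : Type*} [MetricSpace X] (γ : ℝ → X) : Filter X :=
  ⨅ M : ℝ, Filter.principal
    {x | M ≤ Filter.liminf (fun t : ℝ => gromovProd (γ 0) x (γ t)) Filter.atTop}

/-- Two geodesic rays are asymptotic, i.e. they determine the same point of the
Gromov boundary. -/
def AsympRays {X : Type*} [MetricSpace X] (γ σ : ℝ → X) : Prop :=
  ∃ C : ℝ, ∀ t : ℝ, 0 ≤ t → dist (γ t) (σ t) ≤ C

/-- A non-expanding (1-Lipschitz) map. -/
def Nonexpanding {X : Type*} [MetricSpace X] (f : X → X) : Prop :=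
  ∀ x y : X, dist (f x) (f y) ≤ dist x y

/-- Membership in the geodesic region `A(σ, R)` with vertex `[σ]`. -/
def InGeodesicRegion {X : Type*} [MetricSpace X] (σ : ℝ → X) (R : ℝ) (x : X) : Prop :=
  ∃ t : ℝ, 0 ≤ t ∧ dist x (σ t) < R

/-- `f` has geodesic limit `[ξ]` at the boundary point `[γ]`: for every sequence converging
to `[γ]` inside a geodesic region with vertex `[γ]`, the image sequence converges to `[ξ]`. -/
def HasGeodesicLimitAt {X : Type*} [MetricSpace X] (f : X → X) (γ ξ : ℝ → X) : Prop :=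
  ∀ σ : ℝ → X, IsGeodesicRay σ → AsympRays γ σ → ∀ R : ℝ, 0 < R →
    ∀ x : ℕ → X, (∀ n, InGeodesicRegion σ R (x n)) →
      Filter.Tendsto x Filter.atTop (gromovFilter γ) →
      Filter.Tendsto (fun n => f (x n)) Filter.atTop (gromovFilter ξ)

/-- `log λ_{η,p}(f)`, the logarithm of the dilation of `f` at the boundary point `η = [γ]`
with respect to the base point `p`, as an extended real number:
`log λ_{η,p}(f) = liminf_{x → η} (d(x,p) - d(f(x),p))`. -/
def logDilation {X : Type*} [MetricSpace X] (p : X) (γ : ℝ → X) (f : X → X) : EReal :=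
  Filter.liminf (fun x => ((dist x p - dist (f x) p : ℝ) : EReal)) (gromovFilter γ)

/-- The dilation of `f` at `[γ]` w.r.t. `p` is finite with logarithm the real number `L`. -/
def HasLogDilation {X : Type*} [MetricSpace X] (p : X) (γ : ℝ → X) (f : X → X) (L : ℝ) : Prop :=
  logDilation p γ f = (L : EReal)

/-- The point `[γ]` of the Gromov boundary is a boundary regular fixed point (BRFP) of `f`:
the dilation at `[γ]` is finite and `f` has geodesic limit `[γ]` at `[γ]`. -/
def IsBRFP {X : Type*} [MetricSpace X] (f : X → X) (γ : ℝ → X) : Prop :=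
  IsGeodesicRay γ ∧ logDilation (γ 0) γ f ≠ ⊤ ∧ HasGeodesicLimitAt f γ γ

/-- The stable dilation of `f` at the BRFP `[γ]` has logarithm `L`:
`log Λ_η = lim_n (1/n) log λ_{η,p}(f^n)`. -/
def HasStableLogDilation {X : Type*} [MetricSpace X] (p : X) (γ : ℝ → X) (f : X → X)
    (L : ℝ) : Prop :=
  ∃ l : ℕ → ℝ, (∀ n : ℕ, 1 ≤ n → HasLogDilation p γ (f^[n]) (l n)) ∧
    Filter.Tendsto (fun n : ℕ => l n / n) Filter.atTop (nhds L)

/-- A backward orbit of `f`. -/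
def IsBackwardOrbit {X : Type*} (f : X → X) (x : ℕ → X) : Prop :=
  ∀ n : ℕ, f (x (n + 1)) = x n

/-- A sequence has bounded step. -/
def BoundedStep {X : Type*} [MetricSpace X] (x : ℕ → X) : Prop :=
  ∃ S : ℝ, ∀ n : ℕ, dist (x n) (x (n + 1)) ≤ S

/-- The backward step rate of a backward orbit with bounded step equals `b`:
`σ_m = lim_n d(x_{n+m}, x_n)` exists for each `m`, and `b = lim_m σ_m / m`. -/
def HasBackwardStepRate {X : Type*} [MetricSpace X] (x : ℕ → X) (b : ℝ) : Prop :=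
  ∃ σ : ℕ → ℝ,
    (∀ m : ℕ, Filter.Tendsto (fun n : ℕ => dist (x (n + m)) (x n)) Filter.atTop (nhds (σ m))) ∧
    Filter.Tendsto (fun m : ℕ => σ m / m) Filter.atTop (nhds b)

/-- `f` is elliptic: some (equivalently, every) forward orbit is bounded. -/
def IsElliptic {X : Type*} [MetricSpace X] (f : X → X) : Prop :=
  ∃ x : X, Bornology.IsBounded (Set.range fun n : ℕ => f^[n] x)

/-- The limit retract `ω_f`: the union of all ω-limit sets of forward orbits of `f`. -/
def limitRetract {X : Type*} [MetricSpace X] (f : X → X) : Set X :=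
  ⋃ x : X,
    {y | ∃ φ : ℕ → ℕ, StrictMono φ ∧ Filter.Tendsto (fun k => f^[φ k] x) Filter.atTop (nhds y)}

/-- `f` is weakly elliptic: elliptic with non-compact limit retract. -/
def WeaklyElliptic {X : Type*} [MetricSpace X] (f : X → X) : Prop :=
  IsElliptic f ∧ ¬ IsCompact (limitRetract f)

/-- The divergence rate (translation length) of `f` equals `c`:
`c(f) = lim_n d(x, f^n(x))/n` for every `x`. -/
def HasDivergenceRate {X : Type*} [MetricSpace X] (f : X → X) (c : ℝ) : Prop :=
  ∀ x : X, Filter.Tendsto (fun n : ℕ => dist x (f^[n] x) / n) Filter.atTop (nhds c)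

/-- `[γ]` is the Denjoy–Wolff point of `f`: every forward orbit converges to `[γ]`. -/
def IsDenjoyWolffPt {X : Type*} [MetricSpace X] (f : X → X) (γ : ℝ → X) : Prop :=
  IsGeodesicRay γ ∧
    ∀ x : X, Filter.Tendsto (fun n : ℕ => f^[n] x) Filter.atTop (gromovFilter γ)

/-- `h = h_{a,p}` is a horofunction normalized at `p` (`h(p) = 0`): a limit, along an escaping
sequence `w`, of the functions `y ↦ d(w_n, y) - d(w_n, p)`. -/
def IsHorofunctionAt {X : Type*} [MetricSpace X] (p : X) (h : X → ℝ) : Prop :=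
  h p = 0 ∧ ∃ w : ℕ → X, Filter.Tendsto (fun n => dist p (w n)) Filter.atTop Filter.atTop ∧
    ∀ y : X, Filter.Tendsto (fun n => dist (w n) y - dist (w n) p) Filter.atTop (nhds (h y))

/-- The horofunction class of `h` (a point `a ∈ ∂_H X`) projects under the canonical map
`Φ : X̄^H → X̄^G` to the Gromov boundary point `[γ]`, i.e. `a ∈ Φ⁻¹([γ])`. -/
def HoroProjectsTo {X : Type*} [MetricSpace X] (p : X) (h : X → ℝ) (γ : ℝ → X) : Prop :=
  ∃ w : ℕ → X, Filter.Tendsto (fun n => dist p (w n)) Filter.atTop Filter.atTop ∧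
    (∀ y : X, Filter.Tendsto (fun n => dist (w n) y - dist (w n) p) Filter.atTop (nhds (h y))) ∧
    Filter.Tendsto w Filter.atTop (gromovFilter γ)

/-- The horofunction compactification is equivalent to the Gromov compactification:
the canonical continuous map `Φ : X̄^H → X̄^G` is injective (hence a homeomorphism). -/
def CompactificationsEquivalent (X : Type*) [MetricSpace X] : Prop :=
  ∀ (p : X) (h₁ h₂ : X → ℝ), IsHorofunctionAt p h₁ → IsHorofunctionAt p h₂ →
    (∃ γ : ℝ → X, IsGeodesicRay γ ∧ HoroProjectsTo p h₁ γ ∧ HoroProjectsTo p h₂ γ) → h₁ = h₂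

/-- An escaping sequence: it eventually leaves every compact subset. -/
def Escaping {X : Type*} [TopologicalSpace X] (x : ℕ → X) : Prop :=
  ∀ K : Set X, IsCompact K → ∀ᶠ n in Filter.atTop, x n ∉ K

/-- A discrete quasi-geodesic. -/
def DiscreteQuasiGeodesic {X : Type*} [MetricSpace X] (x : ℕ → X) : Prop :=
  ∃ A B : ℝ, 1 ≤ A ∧ 0 ≤ B ∧ ∀ n m : ℕ,
    A⁻¹ * |(n : ℝ) - (m : ℝ)| - B ≤ dist (x n) (x m) ∧
      dist (x n) (x m) ≤ A * |(n : ℝ) - (m : ℝ)| + B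

/-- An almost geodesic curve. -/
def IsAlmostGeodesic {X : Type*} [MetricSpace X] (α : ℝ → X) : Prop :=
  ∀ ε : ℝ, 0 < ε → ∃ T : ℝ, 0 ≤ T ∧ ∀ t₁ t₂ : ℝ, T ≤ t₁ → T ≤ t₂ →
    |t₁ - t₂| - ε ≤ dist (α t₁) (α t₂) ∧ dist (α t₁) (α t₂) ≤ |t₁ - t₂|

end









section DevSection
noncomputable section
open Filter Topology Metric Set

namespace EllipticBRFP

variable {X : Type*} [MetricSpace X]

lemma gp_nonneg (p x y : X) : 0 ≤ gromovProd p x y := by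
  have := dist_triangle x p y
  simp only [gromovProd]
  rw [dist_comm x p] at this
  linarith

lemma gp_le_left (p x y : X) : gromovProd p x y ≤ dist p x := by
  have := dist_triangle p x y
  simp only [gromovProd]
  linarith

lemma gp_le_right (p x y : X) : gromovProd p x y ≤ dist p y := by
  have := dist_triangle p y x
  rw [dist_comm y x] at this
  simp only [gromovProd]; linarith

lemma gp_comm (p x y : X) : gromovProd p x y = gromovProd p y x := by
  simp only [gromovProd]; rw [dist_comm x y]; ring

lemma gp_lip (p x y z : X) : gromovProd p x z ≤ gromovProd p y z + dist x y := by
  have h1 := dist_triangle p y x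
  have h2 := dist_triangle y x z
  simp only [gromovProd]
  rw [dist_comm y x] at h2 h1
  linarith

/-- points on a geodesic: distance from the left endpoint -/
lemma geod_dist_left {g : ℝ → X} {a b : X} (hg : IsGeodesicFromTo g a b) {r : ℝ}
    (hr : r ∈ Set.Icc 0 (dist a b)) : dist a (g r) = r := by
  have h0 : (0:ℝ) ∈ Set.Icc 0 (dist a b) := ⟨le_refl _, dist_nonneg⟩
  have := hg.2.2 0 r h0 hr
  rw [hg.1] at this
  rw [this, abs_of_nonpos (by linarith [hr.1])]
  linarith

lemma geod_dist_right {g : ℝ → X} {a b : X} (hg : IsGeodesicFromTo g a b) {r : ℝ}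
    (hr : r ∈ Set.Icc 0 (dist a b)) : dist b (g r) = dist a b - r := by
  have hd : dist a b ∈ Set.Icc 0 (dist a b) := ⟨dist_nonneg, le_refl _⟩
  have := hg.2.2 (dist a b) r hd hr
  rw [hg.2.1] at this
  rw [this, abs_of_nonneg (by linarith [hr.2])]

/-- the Gromov product is a lower bound for distances to a geodesic -/
lemma gp_le_dist_geod {g : ℝ → X} {a b : X} (hg : IsGeodesicFromTo g a b) {r : ℝ}
    (hr : r ∈ Set.Icc 0 (dist a b)) (q : X) : gromovProd q a b ≤ dist q (g r) := by
  have h1 : dist q (g r) ≥ dist q a - dist a (g r) := by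
    have := dist_triangle q a (g r)
    have h := dist_triangle q (g r) a
    rw [dist_comm (g r) a] at h; linarith
  have h2 : dist q (g r) ≥ dist q b - dist b (g r) := by
    have h := dist_triangle q (g r) b
    rw [dist_comm (g r) b] at h; linarith
  rw [geod_dist_left hg hr] at h1
  rw [geod_dist_right hg hr] at h2
  simp only [gromovProd]
  linarith

/-- the 4-point inequality from slim triangles, with constant 3δ -/
lemma gp_four_point {δ : ℝ} (hδ0 : 0 ≤ δ) (hslim : IsDeltaHyperbolic X δ)
    (hgeo : IsGeodesicSpace X) (q x y z : X) :
    min (gromovProd q x y) (gromovProd q y z) ≤ gromovProd q x z + 3 * δ := by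
  obtain ⟨gxz, hgxz⟩ := hgeo x z
  obtain ⟨gxq, hgxq⟩ := hgeo x q
  obtain ⟨gqz, hgqz⟩ := hgeo q z
  obtain ⟨gxy, hgxy⟩ := hgeo x y
  obtain ⟨gyz, hgyz⟩ := hgeo y z
  set t₀ : ℝ := (dist x z + dist x q - dist q z) / 2 with ht₀
  have ht₀mem : t₀ ∈ Set.Icc (0:ℝ) (dist x z) := by
    constructor
    · have := dist_triangle x q z
      have hc : dist q z ≤ dist q x + dist x z := dist_triangle q x z
      rw [dist_comm q x] at hc
      simp only [ht₀]; linarith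
    · have : dist x q ≤ dist x z + dist z q := dist_triangle x z q
      rw [dist_comm z q] at this
      simp only [ht₀]; linarith
  set m := gxz t₀ with hm
  -- step 1 : dist q m ≤ gromovProd q x z + 2δ
  have step1 : dist q m ≤ gromovProd q x z + 2 * δ := by
    obtain ⟨u, hu, hdu⟩ := hslim x q z gxq gqz gxz hgxq hgqz hgxz t₀ ht₀mem
    rw [← hm] at hdu
    rcases hu with (⟨r, hr, hru⟩ | ⟨r, hr, hru⟩)
    · -- u on [x,q]
      have hqu : dist q u = dist x q - r := by rw [← hru]; exact geod_dist_right hgxq hr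
      have hxu : dist x u = r := by rw [← hru]; exact geod_dist_left hgxq hr
      have hxm : dist x m = t₀ := geod_dist_left hgxz ht₀mem
      have h1 : r ≥ t₀ - δ := by
        have h := dist_triangle x u m
        rw [hxm, hxu, dist_comm u m] at *; linarith
      have h2 : dist q m ≤ dist q u + δ := by
        have h := dist_triangle q u m
        rw [dist_comm u m] at h; linarith
      simp only [gromovProd]
      rw [dist_comm q x]
      simp only [ht₀] at h1 ⊢
      linarith [hqu, h2]
    · -- u on [q,z]
      have hqu : dist q u = r := by rw [← hru]; exact geod_dist_left hgqz hr
      have hzu : dist z u = dist q z - r := by rw [← hru]; exact geod_dist_right hgqz hr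
      have hzm : dist z m = dist x z - t₀ := geod_dist_right hgxz ht₀mem
      have h1 : dist q z - r ≥ (dist x z - t₀) - δ := by
        have h := dist_triangle z u m
        rw [hzm, hzu, dist_comm u m] at *; linarith
      have h2 : dist q m ≤ r + δ := by
        have h := dist_triangle q u m
        rw [dist_comm u m, hqu] at h; linarith
      simp only [gromovProd]
      rw [dist_comm q x]
      simp only [ht₀] at h1 h2 ⊢
      linarith
  -- step 2
  obtain ⟨u, hu, hdu⟩ := hslim x y z gxy gyz gxz hgxy hgyz hgxz t₀ ht₀mem
  rw [← hm] at hdu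
  have hqm : dist q u ≤ gromovProd q x z + 3 * δ := by
    have := dist_triangle q m u
    linarith [step1, hdu]
  rcases hu with (⟨r, hr, hru⟩ | ⟨r, hr, hru⟩)
  · have : gromovProd q x y ≤ dist q u := by rw [← hru]; exact gp_le_dist_geod hgxy hr q
    calc min (gromovProd q x y) (gromovProd q y z) ≤ gromovProd q x y := min_le_left _ _
      _ ≤ _ := le_trans this hqm
  · have : gromovProd q y z ≤ dist q u := by rw [← hru]; exact gp_le_dist_geod hgyz hr q
    calc min (gromovProd q x y) (gromovProd q y z) ≤ gromovProd q y z := min_le_right _ _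
      _ ≤ _ := le_trans this hqm



/-- The boundary Gromov product with the endpoint of `γ`. -/
def gb (γ : ℝ → X) (x : X) : ℝ :=
  Filter.liminf (fun t : ℝ => gromovProd (γ 0) x (γ t)) Filter.atTop

lemma gb_bddBelow (γ : ℝ → X) (x : X) :
    IsBoundedUnder (· ≥ ·) (atTop : Filter ℝ) (fun t => gromovProd (γ 0) x (γ t)) := by
  refine ⟨0, ?_⟩
  simp only [eventually_map, ge_iff_le]
  exact Eventually.of_forall fun t => gp_nonneg _ _ _

lemma gb_bddAbove (γ : ℝ → X) (x : X) :
    IsBoundedUnder (· ≤ ·) (atTop : Filter ℝ) (fun t => gromovProd (γ 0) x (γ t)) := by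
  refine ⟨dist (γ 0) x, ?_⟩
  simp only [eventually_map]
  exact Eventually.of_forall fun t => gp_le_left _ _ _

lemma gb_cobddBelow (γ : ℝ → X) (x : X) :
    IsCoboundedUnder (· ≥ ·) (atTop : Filter ℝ) (fun t => gromovProd (γ 0) x (γ t)) :=
  (gb_bddAbove γ x).isCoboundedUnder_ge

lemma gb_nonneg (γ : ℝ → X) (x : X) : 0 ≤ gb γ x :=
  le_liminf_of_le (gb_cobddBelow γ x) (Eventually.of_forall fun t => gp_nonneg _ _ _)

lemma gb_le_dist (γ : ℝ → X) (x : X) : gb γ x ≤ dist (γ 0) x :=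
  liminf_le_of_frequently_le
    (Frequently.of_forall fun t => gp_le_left _ _ _) (gb_bddBelow γ x)

/-- eventual lower bound for the products defining `gb` -/
lemma gb_eventually_lower (γ : ℝ → X) (x : X) {ε : ℝ} (hε : 0 < ε) :
    ∀ᶠ t in (atTop : Filter ℝ), gb γ x - ε < gromovProd (γ 0) x (γ t) :=
  eventually_lt_of_lt_liminf (by linarith [gb_nonneg γ x] : gb γ x - ε < gb γ x)
    (gb_bddBelow γ x)

lemma gp_ray {γ : ℝ → X} (hray : IsGeodesicRay γ) {s t : ℝ} (hs : 0 ≤ s) (ht : 0 ≤ t) :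
    gromovProd (γ 0) (γ s) (γ t) = min s t := by
  have h0s : dist (γ 0) (γ s) = s := by
    rw [hray 0 s le_rfl hs, abs_of_nonpos (by linarith)]; ring
  have h0t : dist (γ 0) (γ t) = t := by
    rw [hray 0 t le_rfl ht, abs_of_nonpos (by linarith)]; ring
  have hst : dist (γ s) (γ t) = |s - t| := hray s t hs ht
  simp only [gromovProd, h0s, h0t, hst]
  rcases le_total s t with h | h
  · rw [abs_of_nonpos (by linarith), min_eq_left h]; ring
  · rw [abs_of_nonneg (by linarith), min_eq_right h]; ring

lemma dist_ray_zero {γ : ℝ → X} (hray : IsGeodesicRay γ) {s : ℝ} (hs : 0 ≤ s) :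
    dist (γ 0) (γ s) = s := by
  rw [hray 0 s le_rfl hs, abs_of_nonpos (by linarith)]; ring

lemma gb_ray {γ : ℝ → X} (hray : IsGeodesicRay γ) {s : ℝ} (hs : 0 ≤ s) : gb γ (γ s) = s := by
  have hev : ∀ᶠ t in (atTop : Filter ℝ), gromovProd (γ 0) (γ s) (γ t) = s := by
    filter_upwards [eventually_ge_atTop s, eventually_ge_atTop (0:ℝ)] with t hts ht0
    rw [gp_ray hray hs ht0, min_eq_left hts]
  refine le_antisymm ?_ ?_
  · exact liminf_le_of_frequently_le (hev.mono fun t h => h.le).frequently (gb_bddBelow γ _)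
  · exact le_liminf_of_le (gb_cobddBelow γ _) (hev.mono fun t h => h.ge)

lemma gb_lip (γ : ℝ → X) (x y : X) : gb γ x ≤ gb γ y + dist x y := by
  refine le_of_forall_pos_le_add fun ε hε => ?_
  have hfreq : ∃ᶠ t in (atTop : Filter ℝ),
      gromovProd (γ 0) y (γ t) < gb γ y + ε :=
    frequently_lt_of_liminf_lt (gb_cobddBelow γ y)
      (show gb γ y < gb γ y + ε by linarith)
  have : ∃ᶠ t in (atTop : Filter ℝ),
      gromovProd (γ 0) x (γ t) ≤ gb γ y + dist x y + ε := by
    refine hfreq.mono fun t h => ?_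
    have := gp_lip (γ 0) x y (γ t)
    linarith
  exact liminf_le_of_frequently_le this (gb_bddBelow γ x)

end EllipticBRFP

namespace EllipticBRFP

section Hyp

variable {X : Type*} [MetricSpace X] {δ : ℝ} {γ : ℝ → X}

/-- L4b: `gb` of a point is controlled through any intermediate point. -/
lemma gb_ge_min (hδ0 : 0 ≤ δ) (hslim : IsDeltaHyperbolic X δ) (hgeo : IsGeodesicSpace X)
    (x y : X) : min (gromovProd (γ 0) x y) (gb γ y) - 3 * δ ≤ gb γ x := by
  refine le_of_forall_pos_le_add fun ε hε => ?_
  have hev := gb_eventually_lower γ y hε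
  have hev2 : ∀ᶠ t in (atTop : Filter ℝ),
      min (gromovProd (γ 0) x y) (gb γ y) - 3 * δ - ε ≤ gromovProd (γ 0) x (γ t) := by
    refine hev.mono fun t ht => ?_
    have h4 := gp_four_point hδ0 hslim hgeo (γ 0) x y (γ t)
    have hmin : min (gromovProd (γ 0) x y) (gb γ y) - ε
        ≤ min (gromovProd (γ 0) x y) (gromovProd (γ 0) y (γ t)) :=
      le_min (by linarith [min_le_left (gromovProd (γ 0) x y) (gb γ y)])
        (by linarith [min_le_right (gromovProd (γ 0) x y) (gb γ y)])
    linarith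
  have h3 : min (gromovProd (γ 0) x y) (gb γ y) - 3 * δ - ε ≤ gb γ x :=
    le_liminf_of_le (gb_cobddBelow γ x) hev2
  linarith

/-- L4a -/
lemma gp_ge_min_gb (hδ0 : 0 ≤ δ) (hslim : IsDeltaHyperbolic X δ) (hgeo : IsGeodesicSpace X)
    (x y : X) : min (gb γ x) (gb γ y) - 3 * δ ≤ gromovProd (γ 0) x y := by
  refine le_of_forall_pos_le_add fun ε hε => ?_
  obtain ⟨t, htx, hty⟩ :=
    ((gb_eventually_lower γ x hε).and (gb_eventually_lower γ y hε)).exists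
  have h4 := gp_four_point hδ0 hslim hgeo (γ 0) x (γ t) y
  rw [gp_comm (γ 0) (γ t) y] at h4
  have : min (gb γ x - ε) (gb γ y - ε)
      ≤ min (gromovProd (γ 0) x (γ t)) (gromovProd (γ 0) y (γ t)) :=
    min_le_min htx.le hty.le
  have hmin : min (gb γ x - ε) (gb γ y - ε) = min (gb γ x) (gb γ y) - ε := by
    rcases le_total (gb γ x) (gb γ y) with h | h
    · rw [min_eq_left h, min_eq_left (by linarith)]
    · rw [min_eq_right h, min_eq_right (by linarith)]
  linarith [hmin ▸ this]

/-- L5: distance bound via `gb` -/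
lemma dist_le_gb (hδ0 : 0 ≤ δ) (hslim : IsDeltaHyperbolic X δ) (hgeo : IsGeodesicSpace X)
    (x y : X) :
    dist x y ≤ (dist (γ 0) x - gb γ x) + (dist (γ 0) y - gb γ y)
      + |gb γ x - gb γ y| + 2 * (3 * δ) := by
  have h := gp_ge_min_gb hδ0 hslim hgeo (γ := γ) x y
  have hid : dist x y = dist (γ 0) x + dist (γ 0) y - 2 * gromovProd (γ 0) x y := by
    simp only [gromovProd]; ring
  have hmin : min (gb γ x) (gb γ y) = (gb γ x + gb γ y - |gb γ x - gb γ y|) / 2 := by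
    rcases le_total (gb γ x) (gb γ y) with h' | h'
    · rw [min_eq_left h', abs_of_nonpos (by linarith)]; ring
    · rw [min_eq_right h', abs_of_nonneg (by linarith)]; ring
  rw [hid]
  rw [hmin] at h
  linarith

/-- L6: points are close to the ray at parameter `gb` -/
lemma dist_to_ray (hδ0 : 0 ≤ δ) (hslim : IsDeltaHyperbolic X δ) (hgeo : IsGeodesicSpace X)
    (hray : IsGeodesicRay γ) (x : X) :
    dist x (γ (gb γ x)) ≤ (dist (γ 0) x - gb γ x) + 2 * (3 * δ) := by
  set t₀ := gb γ x with ht₀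
  have ht₀0 : 0 ≤ t₀ := gb_nonneg γ x
  have key : t₀ - 3 * δ ≤ gromovProd (γ 0) x (γ t₀) := by
    refine le_of_forall_pos_le_add fun ε hε => ?_
    obtain ⟨t, htx, htt⟩ := ((gb_eventually_lower γ x hε).and (eventually_ge_atTop t₀)).exists
    have ht0 : (0:ℝ) ≤ t := le_trans ht₀0 htt
    have h4 := gp_four_point hδ0 hslim hgeo (γ 0) x (γ t) (γ t₀)
    have hray2 : gromovProd (γ 0) (γ t) (γ t₀) = t₀ := by
      rw [gp_ray hray ht0 ht₀0, min_eq_right htt]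
    rw [hray2] at h4
    have hlow : t₀ - ε ≤ min (gromovProd (γ 0) x (γ t)) t₀ :=
      le_min (by linarith) (by linarith)
    linarith
  have hdt₀ : dist (γ 0) (γ t₀) = t₀ := dist_ray_zero hray ht₀0
  have hid : dist x (γ t₀) = dist (γ 0) x + dist (γ 0) (γ t₀)
      - 2 * gromovProd (γ 0) x (γ t₀) := by
    simp only [gromovProd]; ring
  rw [hid, hdt₀]
  linarith

end Hyp

end EllipticBRFP

namespace EllipticBRFP

section Fil

variable {X : Type*} [MetricSpace X] {γ : ℝ → X}

lemma gromovFilter_eq (γ : ℝ → X) :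
    gromovFilter γ = ⨅ M : ℝ, Filter.principal {x | M ≤ gb γ x} := rfl

lemma mem_gromovFilter_iff {s : Set X} :
    s ∈ gromovFilter γ ↔ ∃ M : ℝ, ∀ x : X, M ≤ gb γ x → x ∈ s := by
  rw [gromovFilter_eq]
  rw [Filter.mem_iInf_of_directed]
  · simp only [Filter.mem_principal]
    constructor
    · rintro ⟨M, hM⟩; exact ⟨M, fun x hx => hM hx⟩
    · rintro ⟨M, hM⟩; exact ⟨M, fun x hx => hM x hx⟩
  · intro M M'
    refine ⟨max M M', ?_, ?_⟩ <;>
      · simp only [le_principal_iff, Filter.mem_principal]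
        intro x hx
        simp only [Set.mem_setOf_eq] at *
        exact le_trans (by simp) hx

lemma eventually_gromovFilter {q : X → Prop} :
    (∀ᶠ x in gromovFilter γ, q x) ↔ ∃ M : ℝ, ∀ x : X, M ≤ gb γ x → q x :=
  mem_gromovFilter_iff

lemma tendsto_gromovFilter_iff {ι : Type*} {lι : Filter ι} {u : ι → X} :
    Tendsto u lι (gromovFilter γ) ↔ ∀ M : ℝ, ∀ᶠ k in lι, M ≤ gb γ (u k) := by
  rw [gromovFilter_eq, tendsto_iInf]
  refine forall_congr' fun M => ?_
  rw [tendsto_principal]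
  rfl

lemma gromovFilter_basic_mem (M : ℝ) : {x : X | M ≤ gb γ x} ∈ gromovFilter γ :=
  mem_gromovFilter_iff.2 ⟨M, fun _ hx => hx⟩

end Fil

section Dil

variable {X : Type*} [MetricSpace X] {γ : ℝ → X} {g : X → X} {c : ℝ}

/-- witnesses realizing the dilation liminf -/
lemma dil_witness (hl : HasLogDilation (γ 0) γ g c) (M : ℝ) :
    ∃ w : X, M ≤ gb γ w ∧ dist w (γ 0) - dist (g w) (γ 0) ≤ c + 1 := by
  unfold HasLogDilation logDilation at hl
  by_contra hcon
  push_neg at hcon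
  have hev : ∀ᶠ x in gromovFilter γ,
      ((c + 1 : ℝ) : EReal) ≤ ((dist x (γ 0) - dist (g x) (γ 0) : ℝ) : EReal) := by
    refine eventually_gromovFilter.2 ⟨M, fun x hx => ?_⟩
    exact_mod_cast (hcon x hx).le
  have hli := le_liminf_of_le (by isBoundedDefault) hev
  rw [hl] at hli
  have : ((c + 1 : ℝ) : EReal) ≤ (c : EReal) := hli
  rw [EReal.coe_le_coe_iff] at this
  linarith

/-- eventual lower bound from the dilation liminf -/
lemma dil_eventual_lower (hl : HasLogDilation (γ 0) γ g c) :
    ∃ M₀ : ℝ, ∀ x : X, M₀ ≤ gb γ x → c - 1 ≤ dist x (γ 0) - dist (g x) (γ 0) := by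
  unfold HasLogDilation logDilation at hl
  have hlt : ((c - 1 : ℝ) : EReal) <
      Filter.liminf (fun x => ((dist x (γ 0) - dist (g x) (γ 0) : ℝ) : EReal)) (gromovFilter γ) := by
    rw [hl]; exact_mod_cast (by linarith : c - 1 < c)
  have hev := eventually_lt_of_lt_liminf hlt
  obtain ⟨M₀, hM₀⟩ := eventually_gromovFilter.1 hev
  exact ⟨M₀, fun x hx => by exact_mod_cast (hM₀ x hx).le⟩

/-- the dilation liminf is bounded by values along sequences converging to the boundary point -/
lemma dil_le_along (hl : HasLogDilation (γ 0) γ g c) {u : ℕ → X}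
    (hu : Tendsto u atTop (gromovFilter γ)) {b : ℝ}
    (hb : ∀ᶠ k in atTop, dist (u k) (γ 0) - dist (g (u k)) (γ 0) ≤ b) : c ≤ b := by
  unfold HasLogDilation logDilation at hl
  set v : X → EReal := fun x => ((dist x (γ 0) - dist (g x) (γ 0) : ℝ) : EReal) with hv
  have h1 : Filter.liminf v (gromovFilter γ) ≤ Filter.liminf v (Filter.map u atTop) :=
    liminf_le_liminf_of_le hu
  have h2 : Filter.liminf v (Filter.map u atTop) ≤ (b : EReal) := by
    refine liminf_le_of_frequently_le' ?_
    rw [Filter.frequently_map]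
    refine (hb.mono fun k hk => ?_).frequently
    simp only [hv]
    exact_mod_cast hk
  simp only [hv] at h1
  rw [hl] at h1
  exact_mod_cast le_trans h1 h2

end Dil

end EllipticBRFP

namespace EllipticBRFP

section Orbit

variable {X : Type*} [MetricSpace X] {f : X → X}

lemma nonexpanding_iterate (hf : Nonexpanding f) (n : ℕ) : Nonexpanding (f^[n]) := by
  induction n with
  | zero => intro x y; simp
  | succ n ih =>
    intro x y
    rw [Function.iterate_succ_apply', Function.iterate_succ_apply']
    exact le_trans (hf _ _) (ih x y)

lemma orbit_bound (hf : Nonexpanding f) (hell : IsElliptic f) (p : X) :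
    ∃ C : ℝ, 0 ≤ C ∧ ∀ n : ℕ, dist (f^[n] p) p ≤ C := by
  obtain ⟨x₀, hb⟩ := hell
  obtain ⟨r, hr⟩ := hb.subset_closedBall x₀
  have hmem : ∀ n : ℕ, dist (f^[n] x₀) x₀ ≤ r := by
    intro n
    have : f^[n] x₀ ∈ Metric.closedBall x₀ r := hr ⟨n, rfl⟩
    simpa [Metric.mem_closedBall] using this
  refine ⟨max 0 (2 * dist p x₀ + r), le_max_left _ _, fun n => ?_⟩
  have h1 := dist_triangle (f^[n] p) (f^[n] x₀) x₀
  have h2 := dist_triangle (f^[n] p) x₀ p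
  have h3 := nonexpanding_iterate hf n p x₀
  have h4 := hmem n
  have h5 : dist x₀ p = dist p x₀ := dist_comm _ _
  refine le_trans ?_ (le_max_right _ _)
  linarith

end Orbit

section Backward

variable {X : Type*} [MetricSpace X] {f : X → X} {γ : ℝ → X}

lemma limitRetract_recurrent (hf : Nonexpanding f) {y : X} (hy : y ∈ limitRetract f)
    {ε : ℝ} (hε : 0 < ε) (N : ℕ) : ∃ m : ℕ, N ≤ m ∧ dist (f^[m] y) y ≤ ε := by
  simp only [limitRetract, Set.mem_iUnion, Set.mem_setOf_eq] at hy
  obtain ⟨a, φ, hφ, hconv⟩ := hy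
  rw [Metric.tendsto_atTop] at hconv
  obtain ⟨J, hJ⟩ := hconv (ε/2) (by linarith)
  set j' := max J (φ J + N) with hj'
  have hj'J : J ≤ j' := le_max_left _ _
  have hφj' : φ J + N ≤ φ j' := le_trans (le_max_right _ _) (hφ.le_apply)
  refine ⟨φ j' - φ J, by omega, ?_⟩
  have hsum : (φ j' - φ J) + φ J = φ j' := by omega
  have key : f^[φ j' - φ J] (f^[φ J] a) = f^[φ j'] a := by
    rw [← Function.iterate_add_apply, hsum]
  have h1 : dist (f^[φ j' - φ J] y) (f^[φ j'] a) ≤ dist y (f^[φ J] a) := by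
    rw [← key]
    exact nonexpanding_iterate hf _ _ _
  have h2 := dist_triangle (f^[φ j' - φ J] y) (f^[φ j'] a) y
  have h3 := hJ J le_rfl
  have h4 := hJ j' hj'J
  rw [dist_comm y (f^[φ J] a)] at h1
  linarith

lemma limitRetract_dist_bound (hf : Nonexpanding f) {p : X} {C : ℝ}
    (hC : ∀ n : ℕ, dist (f^[n] p) p ≤ C) {y : X} (hy : y ∈ limitRetract f) (n : ℕ) :
    dist y p - dist (f^[n] y) p ≤ C := by
  have key : ∀ ε : ℝ, 0 < ε → dist y p - dist (f^[n] y) p ≤ C + ε := by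
    intro ε hε
    obtain ⟨m, hmn, hm⟩ := limitRetract_recurrent hf hy hε n
    have h1 : dist y p ≤ dist (f^[m] y) p + ε := by
      have := dist_triangle y (f^[m] y) p
      rw [dist_comm y (f^[m] y)] at this
      linarith
    have hsplit : f^[m] y = f^[m-n] (f^[n] y) := by
      rw [← Function.iterate_add_apply]
      congr 1
      omega
    have h2 : dist (f^[m] y) p ≤ dist (f^[n] y) p + C := by
      rw [hsplit]
      have ha := dist_triangle (f^[m-n] (f^[n] y)) (f^[m-n] p) p
      have hb := nonexpanding_iterate hf (m-n) (f^[n] y) p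
      have hc := hC (m-n)
      linarith
    linarith
  by_contra hcon
  push_neg at hcon
  have := key ((dist y p - dist (f^[n] y) p - C)/2) (by linarith)
  linarith

/-- pointwise lower bound for dilations -/
lemma dil_ge {g : X → X} {c : ℝ} (hl : HasLogDilation (γ 0) γ g c) {b : ℝ}
    (hall : ∀ x : X, b ≤ dist x (γ 0) - dist (g x) (γ 0)) : b ≤ c := by
  unfold HasLogDilation logDilation at hl
  have hev : ∀ᶠ x in gromovFilter γ,
      ((b : ℝ) : EReal) ≤ ((dist x (γ 0) - dist (g x) (γ 0) : ℝ) : EReal) :=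
    Eventually.of_forall fun x => by exact_mod_cast hall x
  have := le_liminf_of_le (by isBoundedDefault) hev
  rw [hl] at this
  exact_mod_cast this

/-- The backward implication: if a sequence of the limit retract converges to the boundary
point, then the stable dilation is 1. -/
lemma backward_direction (hf : Nonexpanding f) (hell : IsElliptic f)
    {l : ℕ → ℝ} (hl : ∀ n : ℕ, 1 ≤ n → HasLogDilation (γ 0) γ (f^[n]) (l n))
    {L : ℝ} (hlim : Tendsto (fun n : ℕ => l n / n) atTop (nhds L))
    (x : ℕ → X) (hx : ∀ n : ℕ, x n ∈ limitRetract f)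
    (hxt : Tendsto x atTop (gromovFilter γ)) : L = 0 := by
  obtain ⟨C, hC0, hC⟩ := orbit_bound hf hell (γ 0)
  have hub : ∀ n : ℕ, 1 ≤ n → l n ≤ C := fun n hn =>
    dil_le_along (hl n hn) hxt
      (Eventually.of_forall fun k => limitRetract_dist_bound hf hC (hx k) n)
  have hlb : ∀ n : ℕ, 1 ≤ n → -C ≤ l n := by
    intro n hn
    refine dil_ge (hl n hn) fun z => ?_
    have h1 := dist_triangle (f^[n] z) (f^[n] (γ 0)) (γ 0)
    have h2 := nonexpanding_iterate hf n z (γ 0)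
    have h3 := hC n
    linarith
  have hz : Tendsto (fun n : ℕ => l n / n) atTop (nhds 0) := by
    have h0 : Tendsto (fun n : ℕ => C / (n:ℝ)) atTop (nhds 0) :=
      tendsto_const_div_atTop_nhds_zero_nat C
    have h0' : Tendsto (fun n : ℕ => -C / (n:ℝ)) atTop (nhds 0) :=
      tendsto_const_div_atTop_nhds_zero_nat (-C)
    refine tendsto_of_tendsto_of_tendsto_of_le_of_le' h0' h0 ?_ ?_
    · filter_upwards [eventually_ge_atTop 1] with n hn
      have hpos : (0:ℝ) < n := by exact_mod_cast hn
      exact (div_le_div_iff_of_pos_right hpos).2 (hlb n hn)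
    · filter_upwards [eventually_ge_atTop 1] with n hn
      have hpos : (0:ℝ) < n := by exact_mod_cast hn
      exact (div_le_div_iff_of_pos_right hpos).2 (hub n hn)
  exact tendsto_nhds_unique hlim hz

end Backward

end EllipticBRFP

namespace EllipticBRFP

section Forward

variable {X : Type*} [MetricSpace X] {f : X → X} {γ : ℝ → X} {δ : ℝ}

/-- The v-trick: witnesses for the dilation liminf can be chosen with small excess. -/
lemma good_witness (hδ0 : 0 ≤ δ) (hslim : IsDeltaHyperbolic X δ) (hgeo : IsGeodesicSpace X)
    {g : X → X} (hg : Nonexpanding g) {c : ℝ} (hl : HasLogDilation (γ 0) γ g c) (M : ℝ) :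
    ∃ v : X, M ≤ gb γ v ∧ dist (γ 0) v - gb γ v ≤ 3*δ ∧
      dist v (γ 0) - dist (g v) (γ 0) ≤ c + 1 := by
  set r : ℝ := max 0 (M + 3*δ) with hr
  obtain ⟨w, hwgb, hwdil⟩ := dil_witness hl r
  obtain ⟨gw, hgw⟩ := hgeo (γ 0) w
  have hrIcc : r ∈ Set.Icc 0 (dist (γ 0) w) := by
    refine ⟨le_max_left _ _, ?_⟩
    exact le_trans hwgb (gb_le_dist γ w)
  set v := gw r with hv
  have hdpv : dist (γ 0) v = r := geod_dist_left hgw hrIcc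
  have hdwv : dist w v = dist (γ 0) w - r := geod_dist_right hgw hrIcc
  have hgpvw : gromovProd (γ 0) v w = r := by
    simp only [gromovProd]
    rw [dist_comm v w, hdwv, hdpv]
    ring
  have hgbv : r - 3*δ ≤ gb γ v := by
    have hmle := gb_ge_min hδ0 hslim hgeo (γ := γ) v w
    rw [hgpvw, min_eq_left hwgb] at hmle
    linarith
  refine ⟨v, ?_, by linarith, ?_⟩
  · rcases le_or_gt 0 (M + 3*δ) with h | h
    · have : r = M + 3*δ := max_eq_right h
      linarith
    · have := gb_nonneg γ v
      linarith
  · -- dilation bound transfers along the geodesic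
    have h1 : dist (g w) (γ 0) ≤ dist (g v) (γ 0) + dist v w := by
      have ht := dist_triangle (g w) (g v) (γ 0)
      have hgvw : dist (g w) (g v) ≤ dist w v := hg w v
      rw [dist_comm v w]
      linarith
    have h2 : dist v w = dist w (γ 0) - r := by
      rw [dist_comm v w, hdwv, dist_comm w (γ 0)]
    have h3 : dist v (γ 0) = r := by rw [dist_comm]; exact hdpv
    rw [h2] at h1
    rw [h3]
    linarith

/-- The tight pairing inequality. -/
lemma pairing (hδ0 : 0 ≤ δ) (hslim : IsDeltaHyperbolic X δ) (hgeo : IsGeodesicSpace X)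
    {g : X → X} (hg : Nonexpanding g) {A : ℝ} {w w' : X}
    (h3 : dist w (γ 0) - dist (g w) (γ 0) ≤ A)
    (h3' : dist w' (γ 0) - dist (g w') (γ 0) ≤ A)
    (hgb : gb γ w ≤ gb γ w') (hq : gb γ w - A - 3*δ ≤ gb γ (g w')) :
    gb γ w - A - 2*(3*δ) ≤ gb γ (g w) := by
  have hd : dist (g w) (g w') ≤ dist w w' := hg w w'
  have hdist := dist_le_gb hδ0 hslim hgeo (γ := γ) w w'
  rw [abs_of_nonpos (by linarith)] at hdist
  have hgp : gb γ w - A - 3*δ ≤ gromovProd (γ 0) (g w) (g w') := by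
    simp only [gromovProd]
    have e1 : dist (γ 0) (g w) = dist (g w) (γ 0) := dist_comm _ _
    have e2 : dist (γ 0) (g w') = dist (g w') (γ 0) := dist_comm _ _
    have e3 : dist (γ 0) w = dist w (γ 0) := dist_comm _ _
    have e4 : dist (γ 0) w' = dist w' (γ 0) := dist_comm _ _
    rw [e1, e2]
    rw [e3, e4] at hdist
    linarith
  have hmin := gb_ge_min hδ0 hslim hgeo (γ := γ) (g w) (g w')
  have : gb γ w - A - 3*δ ≤ min (gromovProd (γ 0) (g w) (g w')) (gb γ (g w')) :=
    le_min hgp hq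
  linarith

/-- membership in geodesic regions from excess bounds -/
lemma in_region (hδ0 : 0 ≤ δ) (hslim : IsDeltaHyperbolic X δ) (hgeo : IsGeodesicSpace X)
    (hray : IsGeodesicRay γ) {x : X} {E : ℝ} (hx : dist (γ 0) x - gb γ x ≤ E) :
    InGeodesicRegion γ (E + 2*(3*δ) + 1) x := by
  refine ⟨gb γ x, gb_nonneg γ x, ?_⟩
  have := dist_to_ray hδ0 hslim hgeo hray x
  linarith

lemma dist_iter_succ (hf : Nonexpanding f) {C : ℝ} (hC1 : dist (f (γ 0)) (γ 0) ≤ C)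
    (x : X) (i : ℕ) : dist (f^[i+1] x) (γ 0) ≤ dist (f^[i] x) (γ 0) + C := by
  rw [Function.iterate_succ_apply']
  calc dist (f (f^[i] x)) (γ 0)
      ≤ dist (f (f^[i] x)) (f (γ 0)) + dist (f (γ 0)) (γ 0) := dist_triangle _ _ _
    _ ≤ dist (f^[i] x) (γ 0) + C := add_le_add (hf _ _) hC1

lemma dist_iter_le (hf : Nonexpanding f) {C : ℝ} (hC1 : dist (f (γ 0)) (γ 0) ≤ C)
    (x : X) (i m : ℕ) : dist (f^[i + m] x) (γ 0) ≤ dist (f^[i] x) (γ 0) + m * C := by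
  induction m with
  | zero => simp
  | succ m ih =>
    have := dist_iter_succ hf hC1 x (i + m)
    have harith : ((m+1 : ℕ) : ℝ) * C = (m:ℝ) * C + C := by push_cast; ring
    rw [show i + (m+1) = (i + m) + 1 by omega]
    rw [harith]
    linarith

/-- lower bounds for the dilation sequence -/
lemma l_lower (hf : Nonexpanding f) {l : ℕ → ℝ}
    (hl : ∀ n : ℕ, 1 ≤ n → HasLogDilation (γ 0) γ (f^[n]) (l n))
    {C : ℝ} (hC : ∀ n : ℕ, dist (f^[n] (γ 0)) (γ 0) ≤ C)
    {n : ℕ} (hn : 1 ≤ n) : -C ≤ l n := by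
  refine dil_ge (hl n hn) fun z => ?_
  have h1 := dist_triangle (f^[n] z) (f^[n] (γ 0)) (γ 0)
  have h2 := nonexpanding_iterate hf n z (γ 0)
  have h3 := hC n
  linarith

end Forward

end EllipticBRFP

namespace EllipticBRFP

section Chain

variable {X : Type*} [MetricSpace X] {f : X → X} {γ : ℝ → X} {δ : ℝ}

lemma chain (hδ0 : 0 ≤ δ) (hslim : IsDeltaHyperbolic X δ) (hgeo : IsGeodesicSpace X)
    (hray : IsGeodesicRay γ) (hf : Nonexpanding f)
    (hGL : HasGeodesicLimitAt f γ γ)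
    {l : ℕ → ℝ} (hl : ∀ n : ℕ, 1 ≤ n → HasLogDilation (γ 0) γ (f^[n]) (l n))
    {C : ℝ} (hC0 : 0 ≤ C) (hC : ∀ n : ℕ, dist (f^[n] (γ 0)) (γ 0) ≤ C)
    {N : ℕ} (hN : 1 ≤ N) {v : ℕ → X}
    (hv1 : ∀ k : ℕ, (k:ℝ) ≤ gb γ (v k))
    (hv2 : ∀ k : ℕ, dist (γ 0) (v k) - gb γ (v k) ≤ 3*δ)
    (hv3 : ∀ k : ℕ, dist (v k) (γ 0) - dist (f^[N] (v k)) (γ 0) ≤ l N + 1) :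
    ∀ j : ℕ, j ≤ N →
      Tendsto (fun k => gb γ (f^[j] (v k))) atTop atTop ∧
      ∃ E : ℝ, ∀ᶠ k in atTop, dist (γ 0) (f^[j] (v k)) - gb γ (f^[j] (v k)) ≤ E := by
  have hC1 : dist (f (γ 0)) (γ 0) ≤ C := by
    have := hC 1
    simpa using this
  have hui : ∀ (k i : ℕ), i ≤ N →
      dist (v k) (γ 0) - dist (f^[i] (v k)) (γ 0) ≤ l N + 1 + ((N - i : ℕ) : ℝ) * C := by
    intro k i hi
    have h1 : dist (f^[N] (v k)) (γ 0) ≤ dist (f^[i] (v k)) (γ 0) + ((N - i : ℕ):ℝ) * C := by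
      have h := dist_iter_le hf hC1 (v k) i (N - i)
      rwa [show i + (N - i) = N by omega] at h
    linarith [hv3 k]
  have hgbk : ∀ M : ℝ, ∀ᶠ k : ℕ in atTop, M ≤ gb γ (v k) := by
    intro M
    filter_upwards [tendsto_natCast_atTop_atTop.eventually_ge_atTop M] with k hk
    exact le_trans hk (hv1 k)
  intro j
  induction j with
  | zero =>
    intro _
    refine ⟨?_, ⟨3*δ, Eventually.of_forall fun k => by simpa using hv2 k⟩⟩
    have := tendsto_atTop_mono hv1 tendsto_natCast_atTop_atTop
    simpa using this
  | succ j ih =>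
    intro hjN
    obtain ⟨htend, E0, hex0⟩ := ih (by omega)
    set E := max E0 0 with hE
    have hex : ∀ᶠ k : ℕ in atTop, dist (γ 0) (f^[j] (v k)) - gb γ (f^[j] (v k)) ≤ E :=
      hex0.mono fun k hk => le_trans hk (le_max_left _ _)
    obtain ⟨K, hexK⟩ := eventually_atTop.1 hex
    -- (α) qualitative step via the geodesic limit property
    have htendK : Tendsto (fun m => gb γ (f^[j] (v (m + K)))) atTop atTop :=
      (tendsto_add_atTop_iff_nat K).2 htend
    have hx : Tendsto (fun m => f^[j] (v (m + K))) atTop (gromovFilter γ) :=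
      tendsto_gromovFilter_iff.2 fun M => htendK.eventually_ge_atTop M
    have hreg : ∀ m : ℕ, InGeodesicRegion γ (E + 2*(3*δ) + 1) (f^[j] (v (m + K))) :=
      fun m => in_region hδ0 hslim hgeo hray (hexK (m + K) (by omega))
    have hR : 0 < E + 2*(3*δ) + 1 := by
      have : (0:ℝ) ≤ E := le_max_right _ _
      linarith
    have hflim : Tendsto (fun m => f (f^[j] (v (m + K)))) atTop (gromovFilter γ) :=
      hGL γ hray ⟨0, fun t _ => by simp⟩ _ hR _ hreg hx
    have htend' : Tendsto (fun k => gb γ (f^[j+1] (v k))) atTop atTop := by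
      rw [← tendsto_add_atTop_iff_nat K]
      rw [Filter.tendsto_atTop]
      intro b
      have hb := (tendsto_gromovFilter_iff.1 hflim) b
      simpa [Function.iterate_succ_apply'] using hb
    -- the one-step displacement bound at level j
    have hlowj : ∀ᶠ k : ℕ in atTop,
        (if j = 0 then 0 else l j) - 1 ≤ dist (v k) (γ 0) - dist (f^[j] (v k)) (γ 0) := by
      rcases Nat.eq_zero_or_pos j with hj0 | hjpos
      · subst hj0
        refine Eventually.of_forall fun k => ?_
        simp
      · obtain ⟨M₀, hM₀⟩ := dil_eventual_lower (hl j hjpos)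
        filter_upwards [hgbk M₀] with k hk
        rw [if_neg (by omega : ¬ j = 0)]
        exact hM₀ _ hk
    obtain ⟨A, hAbound⟩ : ∃ A : ℝ, ∀ᶠ k : ℕ in atTop,
        dist (f^[j] (v k)) (γ 0) - dist (f^[j+1] (v k)) (γ 0) ≤ A := by
      refine ⟨l N + 1 + ((N - (j+1) : ℕ):ℝ) * C - (if j = 0 then 0 else l j) + 1, ?_⟩
      filter_upwards [hlowj] with k hk
      have := hui k (j+1) hjN
      linarith
    -- (β) the tight pairing bound
    have hpair : ∀ᶠ k : ℕ in atTop,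
        gb γ (f^[j] (v k)) - A - 2*(3*δ) ≤ gb γ (f^[j+1] (v k)) := by
      have hAb2 := hAbound
      filter_upwards [hAbound] with k hk
      obtain ⟨k', hkk'⟩ := (hAb2.and ((htend.eventually_ge_atTop (gb γ (f^[j] (v k)))).and
          (htend'.eventually_ge_atTop (gb γ (f^[j] (v k)) - A - 3*δ)))).exists
      have hk'A := hkk'.1
      have hk'gb := hkk'.2.1
      have hk'q := hkk'.2.2
      rw [Function.iterate_succ_apply'] at hk hk'A hk'q
      have hP := pairing hδ0 hslim hgeo hf hk hk'A hk'gb hk'q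
      rwa [← Function.iterate_succ_apply' f j (v k)] at hP
    refine ⟨htend', ?_⟩
    obtain ⟨M₁, hM₁⟩ := dil_eventual_lower (hl 1 le_rfl)
    refine ⟨E + A + 2*(3*δ) + 2 + C, ?_⟩
    filter_upwards [hpair, hex, htend.eventually_ge_atTop M₁] with k hk1 hk2 hk3
    have hu1 : l 1 - 1 ≤ dist (f^[j] (v k)) (γ 0) - dist (f^[1] (f^[j] (v k))) (γ 0) :=
      hM₁ _ hk3
    have hl1 : -C ≤ l 1 := l_lower hf hl hC le_rfl
    have hit : f^[1] (f^[j] (v k)) = f^[j+1] (v k) := by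
      rw [Function.iterate_one]
      exact (Function.iterate_succ_apply' f j (v k)).symm
    rw [hit] at hu1
    have e1 : dist (γ 0) (f^[j+1] (v k)) = dist (f^[j+1] (v k)) (γ 0) := dist_comm _ _
    have e2 : dist (γ 0) (f^[j] (v k)) = dist (f^[j] (v k)) (γ 0) := dist_comm _ _
    rw [e1]
    rw [e2] at hk2
    linarith

end Chain

end EllipticBRFP

namespace EllipticBRFP

section Superadd

variable {X : Type*} [MetricSpace X] {f : X → X} {γ : ℝ → X} {δ : ℝ}

lemma exists_wit_seq (hδ0 : 0 ≤ δ) (hslim : IsDeltaHyperbolic X δ) (hgeo : IsGeodesicSpace X)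
    (hf : Nonexpanding f)
    {l : ℕ → ℝ} (hl : ∀ n : ℕ, 1 ≤ n → HasLogDilation (γ 0) γ (f^[n]) (l n))
    {N : ℕ} (hN : 1 ≤ N) :
    ∃ v : ℕ → X, (∀ k : ℕ, (k:ℝ) ≤ gb γ (v k)) ∧
      (∀ k : ℕ, dist (γ 0) (v k) - gb γ (v k) ≤ 3*δ) ∧
      (∀ k : ℕ, dist (v k) (γ 0) - dist (f^[N] (v k)) (γ 0) ≤ l N + 1) := by
  have h := fun k : ℕ =>
    good_witness hδ0 hslim hgeo (nonexpanding_iterate hf N) (hl N hN) (k:ℝ)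
  choose v h1 h2 h3 using h
  exact ⟨v, h1, h2, h3⟩

lemma l_superadd (hδ0 : 0 ≤ δ) (hslim : IsDeltaHyperbolic X δ) (hgeo : IsGeodesicSpace X)
    (hray : IsGeodesicRay γ) (hf : Nonexpanding f) (hGL : HasGeodesicLimitAt f γ γ)
    {l : ℕ → ℝ} (hl : ∀ n : ℕ, 1 ≤ n → HasLogDilation (γ 0) γ (f^[n]) (l n))
    {C : ℝ} (hC0 : 0 ≤ C) (hC : ∀ n : ℕ, dist (f^[n] (γ 0)) (γ 0) ≤ C)
    {m n : ℕ} (hm : 1 ≤ m) (hn : 1 ≤ n) : l m + l n ≤ l (n + m) + 2 := by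
  have hN : 1 ≤ n + m := by omega
  obtain ⟨v, hv1, hv2, hv3⟩ := exists_wit_seq hδ0 hslim hgeo hf hl hN
  have hch := chain hδ0 hslim hgeo hray hf hGL hl hC0 hC hN hv1 hv2 hv3 n (by omega)
  obtain ⟨htend, -⟩ := hch
  have hz : Tendsto (fun k => f^[n] (v k)) atTop (gromovFilter γ) :=
    tendsto_gromovFilter_iff.2 fun M => htend.eventually_ge_atTop M
  obtain ⟨M₀, hM₀⟩ := dil_eventual_lower (hl n hn)
  have hgbk : ∀ᶠ k : ℕ in atTop, M₀ ≤ gb γ (v k) := by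
    filter_upwards [tendsto_natCast_atTop_atTop.eventually_ge_atTop M₀] with k hk
    exact le_trans hk (hv1 k)
  have hev : ∀ᶠ k : ℕ in atTop,
      dist (f^[n] (v k)) (γ 0) - dist (f^[m] (f^[n] (v k))) (γ 0) ≤ l (n + m) + 2 - l n := by
    filter_upwards [hgbk] with k hk
    have h1 : l n - 1 ≤ dist (v k) (γ 0) - dist (f^[n] (v k)) (γ 0) := hM₀ _ hk
    have h2 := hv3 k
    have h3 : f^[m] (f^[n] (v k)) = f^[n + m] (v k) := by
      rw [← Function.iterate_add_apply, add_comm m n]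
    rw [h3]
    linarith
  have := dil_le_along (hl m hm) hz hev
  linarith

lemma l_le_two (hδ0 : 0 ≤ δ) (hslim : IsDeltaHyperbolic X δ) (hgeo : IsGeodesicSpace X)
    (hray : IsGeodesicRay γ) (hf : Nonexpanding f) (hGL : HasGeodesicLimitAt f γ γ)
    {l : ℕ → ℝ} (hl : ∀ n : ℕ, 1 ≤ n → HasLogDilation (γ 0) γ (f^[n]) (l n))
    {C : ℝ} (hC0 : 0 ≤ C) (hC : ∀ n : ℕ, dist (f^[n] (γ 0)) (γ 0) ≤ C)
    (hL0 : Tendsto (fun n : ℕ => l n / n) atTop (nhds 0))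
    {n : ℕ} (hn : 1 ≤ n) : l n ≤ 2 := by
  have hiter : ∀ k : ℕ, 1 ≤ k → (k:ℝ) * (l n - 2) ≤ l (k * n) - 2 := by
    intro k
    induction k with
    | zero => intro h; exact absurd h (by norm_num)
    | succ k ih =>
      intro _
      rcases Nat.eq_zero_or_pos k with hk0 | hkpos
      · subst hk0; simp
      · have h1 := ih hkpos
        have h2 : l n + l (k * n) ≤ l (k * n + n) + 2 :=
          l_superadd hδ0 hslim hgeo hray hf hGL hl hC0 hC hn (Nat.mul_pos hkpos hn)
        have h3 : (k + 1) * n = k * n + n := by ring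
        rw [show ((k+1 : ℕ):ℝ) = (k:ℝ) + 1 by push_cast; ring]
        rw [h3]
        linarith
  have htkn : Tendsto (fun k : ℕ => k * n) atTop atTop := by
    refine tendsto_atTop_mono (fun k => ?_) tendsto_id
    calc (id k : ℕ) = k * 1 := by simp
    _ ≤ k * n := Nat.mul_le_mul_left k hn
  have hsub : Tendsto (fun k : ℕ => l (k * n) / ((k * n : ℕ):ℝ)) atTop (nhds 0) :=
    hL0.comp htkn
  have hevge : ∀ᶠ k : ℕ in atTop, (l n - 2) / (n:ℝ) ≤ l (k * n) / ((k * n : ℕ):ℝ) := by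
    filter_upwards [eventually_ge_atTop 1] with k hk
    have hknpos : 0 < k * n := by positivity
    have hknR : (0:ℝ) < ((k * n : ℕ):ℝ) := by exact_mod_cast hknpos
    have hnR : (0:ℝ) < (n:ℝ) := by exact_mod_cast hn
    rw [div_le_div_iff₀ hnR hknR]
    have h1 := hiter k hk
    have hcast : ((k * n : ℕ):ℝ) = (k:ℝ) * (n:ℝ) := by push_cast; ring
    rw [hcast]
    have hkR : (1:ℝ) ≤ (k:ℝ) := by exact_mod_cast hk
    nlinarith [hknR, hnR]
  have hfin : (l n - 2) / (n:ℝ) ≤ 0 := ge_of_tendsto hsub hevge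
  have hnR : (0:ℝ) < (n:ℝ) := by exact_mod_cast hn
  have := (div_nonpos_iff.1 hfin)
  rcases this with ⟨h1, h2⟩ | ⟨h1, h2⟩
  · linarith
  · linarith

end Superadd

end EllipticBRFP

namespace EllipticBRFP

section Window

variable {X : Type*} [MetricSpace X] {f : X → X} {γ : ℝ → X} {δ : ℝ}

lemma window (hδ0 : 0 ≤ δ) (hslim : IsDeltaHyperbolic X δ) (hgeo : IsGeodesicSpace X)
    (hray : IsGeodesicRay γ) (hf : Nonexpanding f) (hGL : HasGeodesicLimitAt f γ γ)
    {l : ℕ → ℝ} (hl : ∀ n : ℕ, 1 ≤ n → HasLogDilation (γ 0) γ (f^[n]) (l n))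
    {C : ℝ} (hC0 : 0 ≤ C) (hC : ∀ n : ℕ, dist (f^[n] (γ 0)) (γ 0) ≤ C)
    (hLB : ∀ i : ℕ, 1 ≤ i → l i ≤ 2)
    {n : ℕ} (hn : 1 ≤ n) (M : ℝ) :
    ∃ w : X, M ≤ gb γ w ∧ dist (γ 0) w - gb γ w ≤ 3*δ ∧
      ∀ j : ℕ, j ≤ n → gb γ w - (C + 4 + 2*(3*δ)) ≤ gb γ (f^[j] w) := by
  obtain ⟨v, hv1, hv2, hv3⟩ := exists_wit_seq hδ0 hslim hgeo hf hl hn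
  have hgbk : ∀ M' : ℝ, ∀ᶠ k : ℕ in atTop, M' ≤ gb γ (v k) := by
    intro M'
    filter_upwards [tendsto_natCast_atTop_atTop.eventually_ge_atTop M'] with k hk
    exact le_trans hk (hv1 k)
  have hch : ∀ j : ℕ, j ≤ n → Tendsto (fun k => gb γ (f^[j] (v k))) atTop atTop :=
    fun j hj => (chain hδ0 hslim hgeo hray hf hGL hl hC0 hC hn hv1 hv2 hv3 j hj).1
  have hAj : ∀ j : ℕ, j ≤ n → ∀ᶠ k : ℕ in atTop,
      dist (v k) (γ 0) - dist (f^[j] (v k)) (γ 0) ≤ C + 4 := by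
    intro j hj
    have hln : l n ≤ 2 := hLB n hn
    rcases Nat.eq_zero_or_pos (n - j) with hnj0 | hnjpos
    · -- j = n
      have hjn : j = n := by omega
      subst hjn
      refine Eventually.of_forall fun k => ?_
      have := hv3 k
      linarith
    · obtain ⟨M₀, hM₀⟩ := dil_eventual_lower (hl (n - j) hnjpos)
      filter_upwards [(hch j hj).eventually_ge_atTop M₀] with k hk
      have hlo : l (n - j) - 1
          ≤ dist (f^[j] (v k)) (γ 0) - dist (f^[n - j] (f^[j] (v k))) (γ 0) := hM₀ _ hk
      have hcomp : f^[n - j] (f^[j] (v k)) = f^[n] (v k) := by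
        rw [← Function.iterate_add_apply]
        congr 1
        omega
      rw [hcomp] at hlo
      have hlnj : -C ≤ l (n - j) := l_lower hf hl hC hnjpos
      have := hv3 k
      linarith
  have hpairj : ∀ j : ℕ, j ≤ n → ∀ᶠ k : ℕ in atTop,
      gb γ (v k) - (C + 4) - 2*(3*δ) ≤ gb γ (f^[j] (v k)) := by
    intro j hj
    filter_upwards [hAj j hj] with k hk
    obtain ⟨k', hk'⟩ := ((hAj j hj).and ((hgbk (gb γ (v k))).and
      ((hch j hj).eventually_ge_atTop (gb γ (v k) - (C + 4) - 3*δ)))).exists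
    exact pairing hδ0 hslim hgeo (nonexpanding_iterate hf j) hk hk'.1 hk'.2.1 hk'.2.2
  have hall : ∀ᶠ k : ℕ in atTop,
      ∀ j ∈ Finset.range (n+1), gb γ (v k) - (C + 4) - 2*(3*δ) ≤ gb γ (f^[j] (v k)) :=
    (Filter.eventually_all_finset _).2
      (fun j hj => hpairj j (Nat.lt_succ_iff.1 (Finset.mem_range.1 hj)))
  obtain ⟨k, hk1, hk2⟩ := (hall.and (hgbk M)).exists
  refine ⟨v k, hk2, hv2 k, fun j hj => ?_⟩
  have := hk1 j (Finset.mem_range.2 (by omega))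
  linarith

lemma forward_direction [ProperSpace X]
    (hδ0 : 0 ≤ δ) (hslim : IsDeltaHyperbolic X δ) (hgeo : IsGeodesicSpace X)
    (hray : IsGeodesicRay γ) (hf : Nonexpanding f) (hGL : HasGeodesicLimitAt f γ γ)
    {l : ℕ → ℝ} (hl : ∀ n : ℕ, 1 ≤ n → HasLogDilation (γ 0) γ (f^[n]) (l n))
    {C : ℝ} (hC0 : 0 ≤ C) (hC : ∀ n : ℕ, dist (f^[n] (γ 0)) (γ 0) ≤ C)
    (hL0 : Tendsto (fun n : ℕ => l n / n) atTop (nhds 0)) :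
    ∃ x : ℕ → X, (∀ n : ℕ, x n ∈ limitRetract f) ∧
      Tendsto x atTop (gromovFilter γ) := by
  have hLB : ∀ i : ℕ, 1 ≤ i → l i ≤ 2 :=
    fun i hi => l_le_two hδ0 hslim hgeo hray hf hGL hl hC0 hC hL0 hi
  have claim : ∀ R : ℝ, ∃ y : X, y ∈ limitRetract f ∧ R ≤ gb γ y := by
    intro R
    obtain ⟨a, ha1, ha2, -⟩ := good_witness hδ0 hslim hgeo (nonexpanding_iterate hf 1)
      (hl 1 le_rfl) (R + (C + 4 + 2*(3*δ) + 4*(3*δ)))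
    have horb : ∀ m : ℕ, gb γ a - (C + 4 + 2*(3*δ) + 4*(3*δ)) ≤ gb γ (f^[m] a) := by
      intro m
      rcases Nat.eq_zero_or_pos m with hm0 | hm
      · subst hm0
        simp only [Function.iterate_zero_apply]
        linarith
      · obtain ⟨w, hw1, hw2, hw3⟩ :=
          window hδ0 hslim hgeo hray hf hGL hl hC0 hC hLB hm (gb γ a)
        have hd : dist a w ≤ 3*δ + 3*δ + (gb γ w - gb γ a) + 2*(3*δ) := by
          have hdab := dist_le_gb hδ0 hslim hgeo (γ := γ) a w
          rw [abs_of_nonpos (by linarith)] at hdab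
          have hgle := gb_le_dist γ a
          have hgle2 := gb_le_dist γ w
          linarith
        have h1 := gb_lip γ (f^[m] w) (f^[m] a)
        have h2 : dist (f^[m] w) (f^[m] a) ≤ dist w a := nonexpanding_iterate hf m w a
        have h3 := hw3 m le_rfl
        rw [dist_comm w a] at h2
        linarith
    have hbd : ∀ m : ℕ, f^[m] a ∈ Metric.closedBall (γ 0) (dist a (γ 0) + C) := by
      intro m
      rw [Metric.mem_closedBall]
      have h1 := dist_triangle (f^[m] a) (f^[m] (γ 0)) (γ 0)
      have h2 := nonexpanding_iterate hf m a (γ 0)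
      have h3 := hC m
      calc dist (f^[m] a) (γ 0) ≤ dist (f^[m] a) (f^[m] (γ 0)) + dist (f^[m] (γ 0)) (γ 0) := h1
        _ ≤ dist a (γ 0) + C := add_le_add h2 h3
    obtain ⟨y, hy, φ, hφ, hconv⟩ :=
      (isCompact_closedBall (γ 0) (dist a (γ 0) + C)).tendsto_subseq hbd
    refine ⟨y, ?_, ?_⟩
    · simp only [limitRetract, Set.mem_iUnion, Set.mem_setOf_eq]
      exact ⟨a, φ, hφ, hconv⟩
    · refine le_of_forall_pos_le_add fun ε hε => ?_
      obtain ⟨m, hm⟩ := (Metric.tendsto_atTop.1 hconv ε hε) |>.imp fun m h => h m le_rfl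
      have h1 := gb_lip γ (f^[φ m] a) y
      have h2 := horb (φ m)
      have hdy : dist (f^[φ m] a) y < ε := hm
      linarith
  choose y hy1 hy2 using claim
  refine ⟨fun n : ℕ => y (n:ℝ), fun n => hy1 _, tendsto_gromovFilter_iff.2 fun M => ?_⟩
  filter_upwards [tendsto_natCast_atTop_atTop.eventually_ge_atTop M] with n hn
  exact le_trans hn (hy2 (n:ℝ))

end Window

end EllipticBRFP


end
end DevSection

/-- **Proposition (indifferent BRFPs of elliptic maps and the limit retract).**
Let `X` be a proper geodesic Gromov hyperbolic metric space and `f : X → X` an elliptic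
non-expanding map with limit retract `ω_f`. Then a BRFP `η = [γ]` of `f` has stable
dilation `Λ_η = 1` (i.e. `log Λ_η = 0`) if and only if `η` is contained in the closure of
`ω_f` in the Gromov compactification (i.e. some sequence in `ω_f` converges to `η`). -/
theorem elliptic_indifferent_BRFP_iff_in_closure_limit_retract
    {X : Type*} [MetricSpace X] [ProperSpace X]
    (hgeo : IsGeodesicSpace X) (hhyp : GromovHyperbolic X)
    (f : X → X) (hf : Nonexpanding f) (hell : IsElliptic f)
    (γ : ℝ → X) (hη : IsBRFP f γ)
    (L : ℝ) (hL : HasStableLogDilation (γ 0) γ f L) :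
    L = 0 ↔ ∃ x : ℕ → X, (∀ n : ℕ, x n ∈ limitRetract f) ∧
      Filter.Tendsto x Filter.atTop (gromovFilter γ) := by
  obtain ⟨δ, hδ0, hslim⟩ := hhyp
  obtain ⟨l, hl, hlim⟩ := hL
  have hray : IsGeodesicRay γ := hη.1
  have hGL : HasGeodesicLimitAt f γ γ := hη.2.2
  obtain ⟨C, hC0, hC⟩ := EllipticBRFP.orbit_bound hf hell (γ 0)
  constructor
  · intro hL0
    subst hL0
    exact EllipticBRFP.forward_direction hδ0 hslim hgeo hray hf hGL hl hC0 hC hlim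
  · rintro ⟨x, hx, hxt⟩
    exact EllipticBRFP.backward_direction hf hell hl hlim x hx hxt
end

section
/- Let (X,d) be a proper geodesic Gromov hyperbolic metric space and f : X → X a non-elliptic non-expanding map with Denjoy–Wolff point ζ ∈ ∂_G X. If η is a boundary regular fixed point of f different from ζ, then log Λ_η ≥ −log Λ_ζ, where Λ_η, Λ_ζ are the stable dilations of f at η and ζ. -/
namespace DilIneq

open Filter Topology Metric Set

variable {X : Type*} [MetricSpace X]

lemma gp_nonneg (p x y : X) : 0 ≤ gromovProd p x y := by
  have h := dist_triangle x p y
  have h1 : dist x p = dist p x := dist_comm _ _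
  unfold gromovProd; linarith

lemma gp_le (p x y : X) : gromovProd p x y ≤ dist p x := by
  have h := dist_triangle p x y
  unfold gromovProd; linarith

lemma gp_comm (p x y : X) : gromovProd p x y = gromovProd p y x := by
  unfold gromovProd; rw [dist_comm x y]; ring

lemma dist_eq_gp (p x y : X) : dist x y = dist p x + dist p y - 2 * gromovProd p x y := by
  unfold gromovProd; ring

lemma gp_lip_fst (p x y z : X) : gromovProd p x z ≤ gromovProd p y z + dist x y := by
  have h1 := dist_triangle p y x
  have h2 := dist_triangle y x z
  have h3 : dist y x = dist x y := dist_comm _ _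
  unfold gromovProd; linarith

lemma gp_lip_snd (p x y z : X) : gromovProd p x y ≤ gromovProd p x z + dist y z := by
  rw [gp_comm p x y, gp_comm p x z]; exact gp_lip_fst p y z x

lemma gp_base (p q x y : X) : gromovProd q x y - dist p q ≤ gromovProd p x y := by
  have h1 := dist_triangle q p x
  have h2 := dist_triangle q p y
  have h3 : dist q p = dist p q := dist_comm _ _
  unfold gromovProd; linarith

/-- any point on a geodesic from `a` to `b` is at distance at least `(a|b)_w` from `w`. -/
lemma claimB {α : ℝ → X} {a b : X} (hα : IsGeodesicFromTo α a b) (w : X) {s : ℝ}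
    (hs : s ∈ Set.Icc 0 (dist a b)) : gromovProd w a b ≤ dist w (α s) := by
  obtain ⟨h0, hL, hd⟩ := hα
  have h1 : dist a (α s) = s := by
    have := hd 0 s ⟨le_refl 0, dist_nonneg⟩ hs
    rw [h0] at this; rw [this, abs_of_nonpos (by linarith [hs.1])]; ring
  have h2 : dist (α s) b = dist a b - s := by
    have := hd s (dist a b) hs ⟨dist_nonneg, le_refl _⟩
    rw [hL] at this; rw [this, abs_of_nonpos (by linarith [hs.2])]; ring
  have h3 := dist_triangle w (α s) a
  have h4 := dist_triangle w (α s) b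
  have h5 : dist (α s) a = s := by rw [dist_comm, h1]
  unfold gromovProd; linarith

/-- Claim A: the special point on a geodesic `[x,z]` at parameter `(z|w)_x` is within
`(x|z)_w + 2δ` of `w`. -/
lemma claimA (hgeo : IsGeodesicSpace X) {δ : ℝ} (hX : IsDeltaHyperbolic X δ)
    {x z : X} {γ : ℝ → X} (hγ : IsGeodesicFromTo γ x z) (w : X) :
    dist w (γ (gromovProd x z w)) ≤ gromovProd w x z + 2 * δ := by
  obtain ⟨α, hα⟩ := hgeo x w
  obtain ⟨β, hβ⟩ := hgeo w z
  set t₀ := gromovProd x z w with ht₀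
  have hmem : t₀ ∈ Set.Icc (0:ℝ) (dist x z) := ⟨gp_nonneg _ _ _, gp_le _ _ _⟩
  obtain ⟨u, hu, hdu⟩ := hX x w z α β γ hα hβ hγ t₀ hmem
  have hxγ : dist x (γ t₀) = t₀ := by
    have := hγ.2.2 0 t₀ ⟨le_refl 0, dist_nonneg⟩ hmem
    rw [hγ.1] at this; rw [this, abs_of_nonpos (by linarith [hmem.1])]; ring
  have hzγ : dist z (γ t₀) = dist x z - t₀ := by
    have := hγ.2.2 t₀ (dist x z) hmem ⟨dist_nonneg, le_refl _⟩
    rw [hγ.2.1] at this; rw [dist_comm, this, abs_of_nonpos (by linarith [hmem.2])]; ring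
  rcases hu with ⟨s, hsmem, rfl⟩ | ⟨s, hsmem, rfl⟩
  · -- u on [x, w]
    have h1 : dist x (α s) = s := by
      have := hα.2.2 0 s ⟨le_refl 0, dist_nonneg⟩ hsmem
      rw [hα.1] at this; rw [this, abs_of_nonpos (by linarith [hsmem.1])]; ring
    have h2 : dist (α s) w = dist x w - s := by
      have := hα.2.2 s (dist x w) hsmem ⟨dist_nonneg, le_refl _⟩
      rw [hα.2.1] at this; rw [this, abs_of_nonpos (by linarith [hsmem.2])]; ring
    have h3 : t₀ - δ ≤ s := by
      have h := dist_triangle x (α s) (γ t₀)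
      have e : dist (α s) (γ t₀) = dist (γ t₀) (α s) := dist_comm _ _
      rw [hxγ, h1] at h; linarith
    have h4 := dist_triangle w (α s) (γ t₀)
    have h5 : dist w (α s) = dist x w - s := by rw [dist_comm, h2]
    have h6 : dist (α s) (γ t₀) = dist (γ t₀) (α s) := dist_comm _ _
    have key : dist x w - t₀ = gromovProd w x z := by
      rw [ht₀]; unfold gromovProd
      rw [dist_comm w x, dist_comm w z]; ring
    rw [← key]; linarith
  · -- u on [w, z]
    have h1 : dist w (β s) = s := by
      have := hβ.2.2 0 s ⟨le_refl 0, dist_nonneg⟩ hsmem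
      rw [hβ.1] at this; rw [this, abs_of_nonpos (by linarith [hsmem.1])]; ring
    have h2 : dist (β s) z = dist w z - s := by
      have := hβ.2.2 s (dist w z) hsmem ⟨dist_nonneg, le_refl _⟩
      rw [hβ.2.1] at this; rw [this, abs_of_nonpos (by linarith [hsmem.2])]; ring
    have h3 := dist_triangle z (β s) (γ t₀)
    have h4 := dist_triangle w (β s) (γ t₀)
    have e1 : dist z (β s) = dist w z - s := by rw [dist_comm, h2]
    have e2 : dist (β s) (γ t₀) = dist (γ t₀) (β s) := dist_comm _ _
    have key : dist w z - dist x z + t₀ = gromovProd w x z := by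
      rw [ht₀]; unfold gromovProd
      rw [dist_comm w x, dist_comm w z]; ring
    rw [← key]; linarith

/-- The four-point (hyperbolic) inequality for Gromov products, with constant `3δ`. -/
lemma four_point (hgeo : IsGeodesicSpace X) {δ : ℝ} (hδ : 0 ≤ δ)
    (hX : IsDeltaHyperbolic X δ) (w x y z : X) :
    min (gromovProd w x y) (gromovProd w y z) - 3 * δ ≤ gromovProd w x z := by
  obtain ⟨γ, hγ⟩ := hgeo x z
  obtain ⟨α, hα⟩ := hgeo x y
  obtain ⟨β, hβ⟩ := hgeo y z
  set t₀ := gromovProd x z w with ht₀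
  have hmem : t₀ ∈ Set.Icc (0:ℝ) (dist x z) := ⟨gp_nonneg _ _ _, gp_le _ _ _⟩
  have hA := claimA hgeo hX hγ w
  rw [← ht₀] at hA
  obtain ⟨u, hu, hdu⟩ := hX x y z α β γ hα hβ hγ t₀ hmem
  rcases hu with ⟨s, hsmem, rfl⟩ | ⟨s, hsmem, rfl⟩
  · have hB := claimB hα w hsmem
    have h4 := dist_triangle w (γ t₀) (α s)
    calc min (gromovProd w x y) (gromovProd w y z) - 3 * δ
        ≤ gromovProd w x y - 3 * δ := by
          have := min_le_left (gromovProd w x y) (gromovProd w y z); linarith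
      _ ≤ gromovProd w x z := by linarith
  · have hB := claimB hβ w hsmem
    have h4 := dist_triangle w (γ t₀) (β s)
    calc min (gromovProd w x y) (gromovProd w y z) - 3 * δ
        ≤ gromovProd w y z - 3 * δ := by
          have := min_le_right (gromovProd w x y) (gromovProd w y z); linarith
      _ ≤ gromovProd w x z := by linarith


lemma ray_dist0 {ρ : ℝ → X} (hρ : IsGeodesicRay ρ) {t : ℝ} (ht : 0 ≤ t) :
    dist (ρ 0) (ρ t) = t := by
  rw [hρ 0 t le_rfl ht, abs_of_nonpos (by linarith)]; ring

lemma ray_gp {ρ : ℝ → X} (hρ : IsGeodesicRay ρ) {s t : ℝ} (hs : 0 ≤ s) (ht : 0 ≤ t) :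
    gromovProd (ρ 0) (ρ s) (ρ t) = min s t := by
  unfold gromovProd
  rw [ray_dist0 hρ hs, ray_dist0 hρ ht, hρ s t hs ht]
  rcases le_total s t with h | h
  · rw [abs_of_nonpos (by linarith), min_eq_left h]; ring
  · rw [abs_of_nonneg (by linarith), min_eq_right h]; ring

/-- The "alignment" of `x` with the boundary point of the ray `ρ`. -/
noncomputable def ell (ρ : ℝ → X) (x : X) : ℝ :=
  Filter.liminf (fun t : ℝ => gromovProd (ρ 0) x (ρ t)) Filter.atTop

lemma mem_gromovFilter (ρ : ℝ → X) (M : ℝ) : {x : X | M ≤ ell ρ x} ∈ gromovFilter ρ :=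
  Filter.mem_iInf_of_mem M (Filter.mem_principal_self _)

lemma ell_ge_of_near {ρ : ℝ → X} (hρ : IsGeodesicRay ρ) {x : X} {t R : ℝ} (ht : 0 ≤ t)
    (hR : dist x (ρ t) ≤ R) : t - R ≤ ell ρ x := by
  apply Filter.le_liminf_of_le
  · exact Filter.IsBoundedUnder.isCoboundedUnder_ge
      (Filter.isBoundedUnder_of ⟨dist (ρ 0) x, fun u => gp_le _ _ _⟩)
  · filter_upwards [Filter.eventually_ge_atTop t, Filter.eventually_ge_atTop (0:ℝ)] with u hu hu0
    have h := gp_lip_fst (ρ 0) (ρ t) x (ρ u)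
    rw [ray_gp hρ ht hu0, min_eq_left hu] at h
    have e : dist (ρ t) x = dist x (ρ t) := dist_comm _ _
    linarith

lemma lg {δ : ℝ}
    (h4 : ∀ w x y z : X, min (gromovProd w x y) (gromovProd w y z) - 3*δ ≤ gromovProd w x z)
    {ρ : ℝ → X} (hρ : IsGeodesicRay ρ) {x : X} {b s : ℝ} (hs : 0 ≤ s) (hb : b < ell ρ x) :
    min b s - 3*δ ≤ gromovProd (ρ 0) x (ρ s) := by
  have hev : ∀ᶠ t in Filter.atTop, b < gromovProd (ρ 0) x (ρ t) :=
    Filter.eventually_lt_of_lt_liminf hb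
      (Filter.isBoundedUnder_of ⟨0, fun u => gp_nonneg _ _ _⟩)
  obtain ⟨t, ht⟩ := (hev.and (Filter.eventually_ge_atTop (max s 0))).exists
  have hts : s ≤ t := le_trans (le_max_left _ _) ht.2
  have ht0 : (0:ℝ) ≤ t := le_trans (le_max_right _ _) ht.2
  have h := h4 (ρ 0) x (ρ t) (ρ s)
  rw [ray_gp hρ ht0 hs, min_eq_right hts] at h
  have hmin : min b s ≤ min (gromovProd (ρ 0) x (ρ t)) s := min_le_min (le_of_lt ht.1) le_rfl
  linarith

lemma ereal_le_liminf {F : Filter X} {u : X → ℝ} {S : Set X} (hS : S ∈ F) {b : ℝ}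
    (h : ∀ x ∈ S, b ≤ u x) :
    (b : EReal) ≤ Filter.liminf (fun x => ((u x : ℝ) : EReal)) F := by
  apply Filter.le_liminf_of_le
  · isBoundedDefault
  · filter_upwards [hS] with x hx
    exact_mod_cast h x hx

/-- Localization of the dilation along the ray. -/
lemma localization {δ : ℝ} (hδ : 0 ≤ δ)
    (h4 : ∀ w x y z : X, min (gromovProd w x y) (gromovProd w y z) - 3*δ ≤ gromovProd w x z)
    {ρ : ℝ → X} (hρ : IsGeodesicRay ρ) {g : X → X} (hg : Nonexpanding g)
    {l : ℝ} (hl : logDilation (ρ 0) ρ g = (l : EReal)) {s : ℝ} (hs : 0 ≤ s) :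
    dist (ρ s) (ρ 0) - dist (g (ρ s)) (ρ 0) - 6*δ ≤ l := by
  have key : ∀ x ∈ {x : X | s + 1 ≤ ell ρ x},
      dist (ρ s) (ρ 0) - dist (g (ρ s)) (ρ 0) - 6*δ ≤ dist x (ρ 0) - dist (g x) (ρ 0) := by
    intro x hx
    have hb : (s : ℝ) < ell ρ x := lt_of_lt_of_le (by linarith) hx
    have h1 : s - 3*δ ≤ gromovProd (ρ 0) x (ρ s) := by
      have h := lg h4 hρ hs hb; rwa [min_self] at h
    have h2 : dist x (ρ s) ≤ dist (ρ 0) x - s + 6*δ := by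
      have e := dist_eq_gp (ρ 0) x (ρ s)
      have e2 : dist (ρ 0) (ρ s) = s := ray_dist0 hρ hs
      linarith
    have h3 : dist (g x) (ρ 0) ≤ dist x (ρ s) + dist (g (ρ s)) (ρ 0) := by
      have ht := dist_triangle (g x) (g (ρ s)) (ρ 0)
      have hgx := hg x (ρ s)
      linarith
    have e3 : dist x (ρ 0) = dist (ρ 0) x := dist_comm _ _
    have e4 : dist (ρ s) (ρ 0) = s := by rw [dist_comm]; exact ray_dist0 hρ hs
    linarith
  have h5 : ((dist (ρ s) (ρ 0) - dist (g (ρ s)) (ρ 0) - 6*δ : ℝ) : EReal)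
      ≤ logDilation (ρ 0) ρ g :=
    ereal_le_liminf (mem_gromovFilter ρ (s+1)) key
  rw [hl] at h5
  exact_mod_cast h5

/-- Separation: points aligned with two non-asymptotic rays have bounded Gromov product. -/
lemma separation {δ : ℝ} (hδ : 0 ≤ δ)
    (h4 : ∀ w x y z : X, min (gromovProd w x y) (gromovProd w y z) - 3*δ ≤ gromovProd w x z)
    {ζ γ : ℝ → X} (hζ : IsGeodesicRay ζ) (hγ : IsGeodesicRay γ)
    (hd : ¬ AsympRays ζ γ) :
    ∃ K : ℝ, 0 ≤ K ∧ ∀ x y : X, K ≤ ell γ x → K ≤ ell ζ y → gromovProd (γ 0) x y ≤ K := by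
  by_contra hcon
  push_neg at hcon
  apply hd
  have hD0 : (0:ℝ) ≤ dist (γ 0) (ζ 0) := dist_nonneg
  refine ⟨3 * dist (γ 0) (ζ 0) + 18*δ, fun t ht => ?_⟩
  obtain ⟨x, y, hx, hy, hxy⟩ := hcon (t + dist (γ 0) (ζ 0) + 12*δ + 10) (by positivity)
  have h1 : t - 3*δ ≤ gromovProd (γ 0) x (γ t) := by
    have h := lg h4 hγ ht (show t + dist (γ 0) (ζ 0) + 12*δ + 10 - 1 < ell γ x by linarith)
    rw [min_eq_right (by linarith)] at h
    exact h
  have h2 : t - 3*δ ≤ gromovProd (ζ 0) y (ζ t) := by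
    have h := lg h4 hζ ht (show t + dist (γ 0) (ζ 0) + 12*δ + 10 - 1 < ell ζ y by linarith)
    rw [min_eq_right (by linarith)] at h
    exact h
  have h2' : t - 3*δ - dist (γ 0) (ζ 0) ≤ gromovProd (γ 0) y (ζ t) := by
    have := gp_base (γ 0) (ζ 0) y (ζ t)
    linarith
  have h3 : t - 6*δ - dist (γ 0) (ζ 0) ≤ gromovProd (γ 0) x (ζ t) := by
    have h := h4 (γ 0) x y (ζ t)
    have hmin : t - 3*δ - dist (γ 0) (ζ 0) ≤ min (gromovProd (γ 0) x y) (gromovProd (γ 0) y (ζ t)) :=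
      le_min (by linarith) h2'
    linarith
  have h5 : t - 9*δ - dist (γ 0) (ζ 0) ≤ gromovProd (γ 0) (γ t) (ζ t) := by
    have h := h4 (γ 0) (γ t) x (ζ t)
    have hc : gromovProd (γ 0) (γ t) x = gromovProd (γ 0) x (γ t) := gp_comm _ _ _
    have hmin : t - 6*δ - dist (γ 0) (ζ 0)
        ≤ min (gromovProd (γ 0) (γ t) x) (gromovProd (γ 0) x (ζ t)) := by
      rw [hc]; exact le_min (by linarith) h3
    linarith
  have e := dist_eq_gp (γ 0) (γ t) (ζ t)
  have e1 : dist (γ 0) (γ t) = t := ray_dist0 hγ ht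
  have e2 : dist (γ 0) (ζ t) ≤ dist (γ 0) (ζ 0) + t := by
    have h := dist_triangle (γ 0) (ζ 0) (ζ t)
    have e3 : dist (ζ 0) (ζ t) = t := ray_dist0 hζ ht
    linarith
  have e4 : dist (ζ t) (γ t) = dist (γ t) (ζ t) := dist_comm _ _
  linarith

/-- Along a subsequence of ray points, the image under `f` stays aligned with the ray. -/
lemma glim_ray {f : X → X} {ρ : ℝ → X} (hρ : IsGeodesicRay ρ)
    (hlim : HasGeodesicLimitAt f ρ ρ) (L T : ℝ) :
    ∃ τ : ℝ, 0 ≤ τ ∧ T ≤ τ ∧ L ≤ ell ρ (f (ρ τ)) := by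
  have h0 : Filter.Tendsto (fun k : ℕ => ρ k) Filter.atTop (gromovFilter ρ) := by
    rw [gromovFilter, Filter.tendsto_iInf]
    intro M
    rw [Filter.tendsto_principal]
    filter_upwards [Filter.eventually_ge_atTop ⌈M⌉₊] with k hk
    have h1 : (k:ℝ) - 0 ≤ ell ρ (ρ k) :=
      ell_ge_of_near hρ (Nat.cast_nonneg k) (by rw [dist_self])
    have h2 : M ≤ (k:ℝ) := le_trans (Nat.le_ceil M) (by exact_mod_cast hk)
    show M ≤ ell ρ (ρ (k:ℝ))
    linarith
  have hregion : ∀ k : ℕ, InGeodesicRegion ρ 1 (ρ (k:ℝ)) :=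
    fun k => ⟨k, Nat.cast_nonneg k, by rw [dist_self]; norm_num⟩
  have hasymp : AsympRays ρ ρ := ⟨0, fun t ht => by rw [dist_self]⟩
  have h1 := hlim ρ hρ hasymp 1 one_pos (fun k : ℕ => ρ (k:ℝ)) hregion h0
  rw [gromovFilter, Filter.tendsto_iInf] at h1
  have h2 := h1 L
  rw [Filter.tendsto_principal] at h2
  obtain ⟨k, hk1, hk2⟩ := (h2.and (Filter.eventually_ge_atTop ⌈max T 0⌉₊)).exists
  refine ⟨(k:ℝ), Nat.cast_nonneg k, ?_, hk1⟩
  have : max T 0 ≤ (k:ℝ) := le_trans (Nat.le_ceil _) (by exact_mod_cast hk2)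
  exact le_trans (le_max_left T 0) this

/-- Iterates of ray points remain near the ray (in geodesic regions going to the
boundary point). -/
lemma invariance {δ : ℝ} (hδ : 0 ≤ δ)
    (h4 : ∀ w x y z : X, min (gromovProd w x y) (gromovProd w y z) - 3*δ ≤ gromovProd w x z)
    {f : X → X} (hf : Nonexpanding f) {ρ : ℝ → X} (hρ : IsGeodesicRay ρ)
    (hlim : HasGeodesicLimitAt f ρ ρ) {Ca : ℝ} (hCa : 0 ≤ Ca)
    (ha : ∀ s : ℝ, 0 ≤ s → dist (ρ s) (ρ 0) - dist (f (ρ s)) (ρ 0) ≤ Ca) (n : ℕ) :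
    ∃ R : ℝ, 0 ≤ R ∧ ∀ T : ℝ, ∃ s t : ℝ, 0 ≤ s ∧ 0 ≤ t ∧ T ≤ t ∧
      dist (f^[n] (ρ s)) (ρ t) ≤ R := by
  induction n with
  | zero =>
    refine ⟨0, le_rfl, fun T => ⟨max T 0, max T 0, le_max_right T 0, le_max_right T 0,
      le_max_left T 0, ?_⟩⟩
    rw [Function.iterate_zero_apply, dist_self]
  | succ n ih =>
    obtain ⟨R, hR, hInv⟩ := ih
    have ha₀ : ∀ z : X, dist (f z) (ρ 0) ≤ dist z (ρ 0) + dist (ρ 0) (f (ρ 0)) := by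
      intro z
      have h1 := dist_triangle (f z) (f (ρ 0)) (ρ 0)
      have h2 := hf z (ρ 0)
      have e : dist (f (ρ 0)) (ρ 0) = dist (ρ 0) (f (ρ 0)) := dist_comm _ _
      linarith
    have ha₀0 : 0 ≤ dist (ρ 0) (f (ρ 0)) := dist_nonneg
    refine ⟨3*R + dist (ρ 0) (f (ρ 0)) + Ca + 15*δ,
      by linarith, fun T => ?_⟩
    obtain ⟨s, t, hs, ht0, htT, hw⟩ := hInv (max T 0 + 2*R + Ca + 3*δ + 1)
    obtain ⟨τ, hτ0, hτt, hτell⟩ := glim_ray hρ hlim (t + 1) t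
    have hgp1 : t - R ≤ gromovProd (ρ 0) (f^[n] (ρ s)) (ρ τ) := by
      have h := gp_lip_fst (ρ 0) (ρ t) (f^[n] (ρ s)) (ρ τ)
      rw [ray_gp hρ ht0 hτ0, min_eq_left hτt] at h
      have e : dist (ρ t) (f^[n] (ρ s)) = dist (f^[n] (ρ s)) (ρ t) := dist_comm _ _
      linarith
    have haw : dist (f^[n] (ρ s)) (ρ 0) - dist (f (f^[n] (ρ s))) (ρ 0) ≤ Ca + 2*R := by
      have h1 := abs_le.1 (abs_dist_sub_le (f^[n] (ρ s)) (ρ t) (ρ 0))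
      have h2 := abs_le.1 (abs_dist_sub_le (f (f^[n] (ρ s))) (f (ρ t)) (ρ 0))
      have h3 := hf (f^[n] (ρ s)) (ρ t)
      have h4' := ha t ht0
      linarith [h1.1, h1.2, h2.1, h2.2]
    have haτ := ha τ hτ0
    have hgp2 : t - 2*R - Ca ≤ gromovProd (ρ 0) (f (f^[n] (ρ s))) (f (ρ τ)) := by
      have e1 := dist_eq_gp (ρ 0) (f^[n] (ρ s)) (ρ τ)
      have e2 := dist_eq_gp (ρ 0) (f (f^[n] (ρ s))) (f (ρ τ))
      have h3 := hf (f^[n] (ρ s)) (ρ τ)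
      have e3 : dist (ρ 0) (f^[n] (ρ s)) = dist (f^[n] (ρ s)) (ρ 0) := dist_comm _ _
      have e4 : dist (ρ 0) (f (f^[n] (ρ s))) = dist (f (f^[n] (ρ s))) (ρ 0) := dist_comm _ _
      have e5 : dist (ρ 0) (ρ τ) = dist (ρ τ) (ρ 0) := dist_comm _ _
      have e6 : dist (ρ 0) (f (ρ τ)) = dist (f (ρ τ)) (ρ 0) := dist_comm _ _
      linarith [hgp1]
    have hs'0 : 0 ≤ t - 2*R - Ca - 3*δ := by linarith [le_max_right T 0]
    have hs't : t - 2*R - Ca - 3*δ ≤ t := by linarith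
    have hlg : t - 2*R - Ca - 3*δ - 3*δ ≤ gromovProd (ρ 0) (f (ρ τ)) (ρ (t - 2*R - Ca - 3*δ)) := by
      have h := lg h4 hρ hs'0 (show (t:ℝ) < ell ρ (f (ρ τ)) by linarith)
      rw [min_eq_right hs't] at h
      exact h
    have hgp3 : t - 2*R - Ca - 3*δ - 6*δ
        ≤ gromovProd (ρ 0) (f (f^[n] (ρ s))) (ρ (t - 2*R - Ca - 3*δ)) := by
      have h := h4 (ρ 0) (f (f^[n] (ρ s))) (f (ρ τ)) (ρ (t - 2*R - Ca - 3*δ))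
      have hmin : t - 2*R - Ca - 3*δ - 3*δ
          ≤ min (gromovProd (ρ 0) (f (f^[n] (ρ s))) (f (ρ τ)))
              (gromovProd (ρ 0) (f (ρ τ)) (ρ (t - 2*R - Ca - 3*δ))) :=
        le_min (by linarith) hlg
      linarith
    have hdfw : dist (f (f^[n] (ρ s))) (ρ 0) ≤ t + R + dist (ρ 0) (f (ρ 0)) := by
      have h1 := ha₀ (f^[n] (ρ s))
      have h2 := dist_triangle (f^[n] (ρ s)) (ρ t) (ρ 0)
      have e : dist (ρ t) (ρ 0) = t := by rw [dist_comm]; exact ray_dist0 hρ ht0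
      linarith
    refine ⟨s, t - 2*R - Ca - 3*δ, hs, hs'0, by linarith [le_max_left T 0], ?_⟩
    have e7 := dist_eq_gp (ρ 0) (f (f^[n] (ρ s))) (ρ (t - 2*R - Ca - 3*δ))
    have e8 : dist (ρ 0) (ρ (t - 2*R - Ca - 3*δ)) = t - 2*R - Ca - 3*δ := ray_dist0 hρ hs'0
    have e9 : dist (ρ 0) (f (f^[n] (ρ s))) = dist (f (f^[n] (ρ s))) (ρ 0) := dist_comm _ _
    have hgoal : dist (f (f^[n] (ρ s))) (ρ (t - 2*R - Ca - 3*δ))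
        ≤ 3*R + dist (ρ 0) (f (ρ 0)) + Ca + 15*δ := by linarith
    rw [Function.iterate_succ_apply']
    exact hgoal


end DilIneq

/-- **Proposition (dilation inequality for non-elliptic maps).**
Let `X` be a proper geodesic Gromov hyperbolic metric space and `f : X → X` a non-elliptic
non-expanding map with Denjoy–Wolff point `ζ`. If `η` is a BRFP of `f` different from `ζ`,
then `log Λ_η ≥ −log Λ_ζ`. -/


theorem dilation_inequality
    {X : Type*} [MetricSpace X] [ProperSpace X]
    (hgeo : IsGeodesicSpace X) (hhyp : GromovHyperbolic X)
    (f : X → X) (hf : Nonexpanding f) (hne : ¬ IsElliptic f)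
    (ζ : ℝ → X) (hDW : IsDenjoyWolffPt f ζ) (hζBRFP : IsBRFP f ζ)
    (γ : ℝ → X) (hη : IsBRFP f γ) (hdistinct : ¬ AsympRays ζ γ)
    (Lζ Lη : ℝ)
    (hLζ : HasStableLogDilation (ζ 0) ζ f Lζ)
    (hLη : HasStableLogDilation (γ 0) γ f Lη) :
    -Lζ ≤ Lη := by
  classical
  obtain ⟨δ, hδ, hX⟩ := hhyp
  have h4 := DilIneq.four_point hgeo hδ hX
  obtain ⟨hγray, hγfin, hγlim⟩ := hη
  obtain ⟨hζray, hζfin, hζlim⟩ := hζBRFP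
  obtain ⟨lη, hlη, hlηlim⟩ := hLη
  obtain ⟨lζ, hlζ, hlζlim⟩ := hLζ
  have hfi : ∀ n : ℕ, Nonexpanding (f^[n]) := by
    intro n
    induction n with
    | zero => intro x y; simp [Function.iterate_zero_apply]
    | succ n ih =>
      intro x y
      rw [Function.iterate_succ_apply', Function.iterate_succ_apply']
      exact le_trans (hf _ _) (ih x y)
  have locγ : ∀ n : ℕ, 1 ≤ n → ∀ s : ℝ, 0 ≤ s →
      dist (γ s) (γ 0) - dist (f^[n] (γ s)) (γ 0) - 6*δ ≤ lη n :=
    fun n hn s hs => DilIneq.localization hδ h4 hγray (hfi n) (hlη n hn) hs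
  have locζ : ∀ n : ℕ, 1 ≤ n → ∀ s : ℝ, 0 ≤ s →
      dist (ζ s) (ζ 0) - dist (f^[n] (ζ s)) (ζ 0) - 6*δ ≤ lζ n :=
    fun n hn s hs => DilIneq.localization hδ h4 hζray (hfi n) (hlζ n hn) hs
  have hCaγ0 : (0:ℝ) ≤ max (lη 1 + 6*δ) 0 := le_max_right _ _
  have haγ : ∀ s : ℝ, 0 ≤ s → dist (γ s) (γ 0) - dist (f (γ s)) (γ 0) ≤ max (lη 1 + 6*δ) 0 := by
    intro s hs
    have h := locγ 1 le_rfl s hs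
    rw [Function.iterate_one] at h
    exact le_trans (by linarith) (le_max_left _ _)
  have hCaζ0 : (0:ℝ) ≤ max (lζ 1 + 6*δ) 0 := le_max_right _ _
  have haζ : ∀ s : ℝ, 0 ≤ s → dist (ζ s) (ζ 0) - dist (f (ζ s)) (ζ 0) ≤ max (lζ 1 + 6*δ) 0 := by
    intro s hs
    have h := locζ 1 le_rfl s hs
    rw [Function.iterate_one] at h
    exact le_trans (by linarith) (le_max_left _ _)
  obtain ⟨K, hK0, hKsep⟩ := DilIneq.separation hδ h4 hζray hγray hdistinct
  have hD0 : (0:ℝ) ≤ dist (γ 0) (ζ 0) := dist_nonneg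
  have key : ∀ n : ℕ, 1 ≤ n →
      -(2*K + 2*dist (γ 0) (ζ 0) + 12*δ) - lζ n ≤ lη n := by
    intro n hn
    obtain ⟨Rγ, hRγ, hIγ⟩ := DilIneq.invariance hδ h4 hf hγray hγlim hCaγ0 haγ n
    obtain ⟨Rζ, hRζ, hIζ⟩ := DilIneq.invariance hδ h4 hf hζray hζlim hCaζ0 haζ n
    obtain ⟨s, t, hs, ht0, htK, hwγ⟩ := hIγ (K + Rγ)
    obtain ⟨u, v, hu, hv0, hvK, hwζ⟩ := hIζ (K + Rζ)
    have hellγ : K ≤ DilIneq.ell γ (f^[n] (γ s)) := by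
      have h := DilIneq.ell_ge_of_near hγray ht0 hwγ; linarith
    have hellζ : K ≤ DilIneq.ell ζ (f^[n] (ζ u)) := by
      have h := DilIneq.ell_ge_of_near hζray hv0 hwζ; linarith
    have hsep := hKsep _ _ hellγ hellζ
    have hXY : dist (f^[n] (γ s)) (f^[n] (ζ u)) ≤ dist (γ s) (ζ u) := hfi n _ _
    have e1 : dist (γ s) (γ 0) = s := by rw [dist_comm]; exact DilIneq.ray_dist0 hγray hs
    have e2 : dist (ζ u) (ζ 0) = u := by rw [dist_comm]; exact DilIneq.ray_dist0 hζray hu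
    have hd1 : dist (γ s) (ζ u) ≤ s + dist (γ 0) (ζ 0) + u := by
      have h1 := dist_triangle (γ s) (γ 0) (ζ u)
      have h2 := dist_triangle (γ 0) (ζ 0) (ζ u)
      have e3 : dist (ζ 0) (ζ u) = u := DilIneq.ray_dist0 hζray hu
      linarith
    have egp := DilIneq.dist_eq_gp (γ 0) (f^[n] (γ s)) (f^[n] (ζ u))
    have hYq : dist (f^[n] (ζ u)) (ζ 0) ≤ dist (f^[n] (ζ u)) (γ 0) + dist (γ 0) (ζ 0) :=
      dist_triangle _ _ _
    have hlη' := locγ n hn s hs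
    have hlζ' := locζ n hn u hu
    have c1 : dist (γ 0) (f^[n] (γ s)) = dist (f^[n] (γ s)) (γ 0) := dist_comm _ _
    have c2 : dist (γ 0) (f^[n] (ζ u)) = dist (f^[n] (ζ u)) (γ 0) := dist_comm _ _
    linarith
  have hC : Filter.Tendsto (fun n : ℕ => -(2*K + 2*dist (γ 0) (ζ 0) + 12*δ)/(n:ℝ))
      Filter.atTop (nhds 0) := tendsto_const_div_atTop_nhds_zero_nat _
  have hsum : Filter.Tendsto (fun n : ℕ => lη n/(n:ℝ) + lζ n/(n:ℝ))
      Filter.atTop (nhds (Lη + Lζ)) := hlηlim.add hlζlim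
  have h0 : (0:ℝ) ≤ Lη + Lζ := by
    have hle := le_of_tendsto_of_tendsto hC hsum ?_
    · linarith
    · filter_upwards [Filter.eventually_ge_atTop 1] with n hn
      have hn0 : (0:ℝ) < n := by exact_mod_cast hn
      have hkey := key n hn
      have h1 : -(2*K + 2*dist (γ 0) (ζ 0) + 12*δ) ≤ lη n + lζ n := by linarith
      calc -(2*K + 2*dist (γ 0) (ζ 0) + 12*δ)/(n:ℝ) ≤ (lη n + lζ n)/(n:ℝ) :=
            div_le_div_of_nonneg_right h1 hn0.le
        _ = lη n/(n:ℝ) + lζ n/(n:ℝ) := add_div _ _ _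
  linarith
end

section
/- Let X be a proper metric space and f : X → X a non-expanding map. If a backward orbit (x_n) of f is not escaping, then f is elliptic, every point x_n belongs to the limit retract ω_f, the orbit (x_n) is relatively compact, and x_n = (f|_{ω_f})^{-n}(x_0) for all n, where f|_{ω_f} is the isometry of ω_f induced by f. -/
/- ------------------------------------------------------------------------ -/
/- Auxiliary lemmas for the proof.                                          -/
/- ------------------------------------------------------------------------ -/

section AuxNE

lemma Nonexpanding.iterate_le {X : Type*} [MetricSpace X] {f : X → X}
    (hf : Nonexpanding f) (n : ℕ) :
    ∀ a b : X, dist (f^[n] a) (f^[n] b) ≤ dist a b := by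
  induction n with
  | zero => intro a b; simp
  | succ n ih =>
    intro a b
    rw [Function.iterate_succ_apply', Function.iterate_succ_apply']
    exact le_trans (hf _ _) (ih a b)

lemma Nonexpanding.continuous {X : Type*} [MetricSpace X] {f : X → X}
    (hf : Nonexpanding f) : Continuous f := by
  have : LipschitzWith 1 f := LipschitzWith.of_dist_le_mul (by intro a b; simpa using hf a b)
  exact this.continuous

lemma IsBackwardOrbit.iterate_eq {X : Type*} {f : X → X} {x : ℕ → X}
    (hx : IsBackwardOrbit f x) :
    ∀ m n : ℕ, f^[m] (x (n + m)) = x n := by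
  intro m
  induction m with
  | zero => intro n; simp
  | succ m ih =>
    intro n
    rw [Function.iterate_succ_apply, Nat.add_succ, hx (n + m)]
    exact ih n

open Filter Topology Metric Set Bornology

/-- Along the subsequence, iterates of the limit point `p` approximate the backward
orbit: `f^[φ k - i] p → x i`. -/
lemma backward_approx {X : Type*} [MetricSpace X] {f : X → X} {x : ℕ → X}
    (hf : Nonexpanding f) (hx : IsBackwardOrbit f x)
    {φ : ℕ → ℕ} (hφ : StrictMono φ) {p : X}
    (hp : Tendsto (fun k => x (φ k)) atTop (𝓝 p)) (i : ℕ) :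
    Tendsto (fun k => f^[φ k - i] p) atTop (𝓝 (x i)) := by
  rw [tendsto_iff_dist_tendsto_zero]
  have hd : Tendsto (fun k => dist p (x (φ k))) atTop (𝓝 0) := by
    have := tendsto_iff_dist_tendsto_zero.mp hp
    simpa [dist_comm] using this
  apply squeeze_zero' (Eventually.of_forall fun k => dist_nonneg) _ hd
  filter_upwards [eventually_atTop.mpr ⟨i, fun k hk => hk.trans hφ.le_apply⟩] with k hk
  have h1 : f^[φ k - i] (x (φ k)) = x i := by
    have h2 := hx.iterate_eq (φ k - i) i
    rwa [Nat.add_sub_cancel' hk] at h2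
  calc dist (f^[φ k - i] p) (x i)
      = dist (f^[φ k - i] p) (f^[φ k - i] (x (φ k))) := by rw [h1]
    _ ≤ dist p (x (φ k)) := hf.iterate_le _ _ _

lemma backward_mem_limitRetract {X : Type*} [MetricSpace X] {f : X → X} {x : ℕ → X}
    (hf : Nonexpanding f) (hx : IsBackwardOrbit f x)
    {φ : ℕ → ℕ} (hφ : StrictMono φ) {p : X}
    (hp : Tendsto (fun k => x (φ k)) atTop (𝓝 p)) (i : ℕ) :
    x i ∈ limitRetract f := by
  apply Set.mem_iUnion.mpr
  refine ⟨p, fun k => φ (k + i) - i, ?_, ?_⟩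
  · intro a b hab
    have h1 : i ≤ φ (a + i) := le_trans (Nat.le_add_left i a) hφ.le_apply
    have h2 : φ (a + i) < φ (b + i) := hφ (by omega)
    show φ (a + i) - i < φ (b + i) - i
    omega
  · exact (backward_approx hf hx hφ hp i).comp (tendsto_add_atTop_nat i)

lemma exists_bound_of_le (g : ℕ → ℝ) (L : ℕ) : ∃ C : ℝ, ∀ j ≤ L, g j ≤ C := by
  induction L with
  | zero =>
    refine ⟨g 0, fun j hj => ?_⟩
    have : j = 0 := Nat.le_zero.mp hj
    simp [this]
  | succ L ih =>
    obtain ⟨C, hC⟩ := ih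
    refine ⟨max C (g (L + 1)), fun j hj => ?_⟩
    rcases Nat.lt_or_ge j (L + 1) with h | h
    · exact le_trans (hC j (by omega)) (le_max_left _ _)
    · have hj1 : j = L + 1 := by omega
      subst hj1; exact le_max_right _ _

/-- **Całka's theorem**: for a non-expanding self-map of a proper metric space, an orbit
with a convergent subsequence is bounded. -/
lemma calka {X : Type*} [MetricSpace X] [ProperSpace X] {f : X → X}
    (hf : Nonexpanding f) {p q : X} {ψ : ℕ → ℕ} (hψ : StrictMono ψ)
    (hq : Tendsto (fun k => f^[ψ k] p) atTop (𝓝 q)) :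
    IsBounded (Set.range fun n : ℕ => f^[n] p) := by
  -- Recurrence: q returns ε-close to itself at arbitrarily large times.
  have hrec : ∀ ε : ℝ, 0 < ε → ∀ N : ℕ, ∃ t : ℕ, N < t ∧ dist (f^[t] q) q ≤ ε := by
    intro ε hε N
    obtain ⟨k₀, hk₀⟩ := Metric.tendsto_atTop.mp hq (ε / 2) (by positivity)
    obtain ⟨k', hk'1, hk'2⟩ : ∃ k', k₀ ≤ k' ∧ N + ψ k₀ < ψ k' := by
      refine ⟨max k₀ (N + ψ k₀ + 1), le_max_left _ _, ?_⟩
      calc N + ψ k₀ < N + ψ k₀ + 1 := by omega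
        _ ≤ max k₀ (N + ψ k₀ + 1) := le_max_right _ _
        _ ≤ ψ (max k₀ (N + ψ k₀ + 1)) := hψ.le_apply
    refine ⟨ψ k' - ψ k₀, by omega, ?_⟩
    have heq : f^[ψ k' - ψ k₀] (f^[ψ k₀] p) = f^[ψ k'] p := by
      rw [← Function.iterate_add_apply]
      congr 1
      omega
    calc dist (f^[ψ k' - ψ k₀] q) q
        ≤ dist (f^[ψ k' - ψ k₀] q) (f^[ψ k' - ψ k₀] (f^[ψ k₀] p))
          + dist (f^[ψ k' - ψ k₀] (f^[ψ k₀] p)) q := dist_triangle _ _ _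
      _ ≤ dist q (f^[ψ k₀] p) + dist (f^[ψ k'] p) q := by
          exact add_le_add (hf.iterate_le _ _ _) (le_of_eq (by rw [heq]))
      _ ≤ ε / 2 + ε / 2 := by
          refine add_le_add ?_ (hk₀ k' hk'1).le
          rw [dist_comm]
          exact (hk₀ k₀ le_rfl).le
      _ = ε := by ring
  -- Dichotomy on the set of 1-return times of q.
  by_cases hA : ∃ L : ℕ, 1 ≤ L ∧ ∀ m : ℕ, dist (f^[m] q) q ≤ 1 →
      ∃ m', dist (f^[m'] q) q ≤ 1 ∧ m < m' ∧ m' ≤ m + L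
  · -- Case A: 1-return times are syndetic, so the orbit of q (hence of p) is bounded.
    obtain ⟨L, hL1, hLs⟩ := hA
    obtain ⟨C, hC⟩ := exists_bound_of_le (fun j => dist (f^[j] q) q) L
    have hP : ∀ n : ℕ, ∃ m : ℕ, dist (f^[m] q) q ≤ 1 ∧ m ≤ n ∧ n - m ≤ L := by
      intro n
      induction n with
      | zero => exact ⟨0, by simp, le_refl 0, by simp⟩
      | succ n ih =>
        obtain ⟨m, hm1, hm2, hm3⟩ := ih
        by_cases hcase : n + 1 - m ≤ L
        · exact ⟨m, hm1, by omega, hcase⟩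
        · obtain ⟨m', hm'1, hm'2, hm'3⟩ := hLs m hm1
          exact ⟨m', hm'1, by omega, by omega⟩
    have hq_orbit : ∀ n : ℕ, dist (f^[n] q) q ≤ C + 1 := by
      intro n
      obtain ⟨m, hm1, hm2, hm3⟩ := hP n
      have heq : f^[n - m] (f^[m] q) = f^[n] q := by
        rw [← Function.iterate_add_apply]
        congr 1
        omega
      calc dist (f^[n] q) q ≤ dist (f^[n] q) (f^[n - m] q) + dist (f^[n - m] q) q :=
            dist_triangle _ _ _
        _ ≤ dist (f^[m] q) q + C := by
            refine add_le_add ?_ (hC _ hm3)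
            rw [← heq]
            exact hf.iterate_le _ _ _
        _ ≤ 1 + C := by linarith
        _ = C + 1 := by ring
    obtain ⟨k₁, hk₁⟩ := Metric.tendsto_atTop.mp hq 1 one_pos
    have hk₁' : dist (f^[ψ k₁] p) q ≤ 1 := (hk₁ k₁ le_rfl).le
    obtain ⟨D, hD⟩ := exists_bound_of_le (fun j => dist (f^[j] p) q) (ψ k₁)
    have hp_orbit : ∀ n : ℕ, dist (f^[n] p) q ≤ max D (C + 3) := by
      intro n
      rcases Nat.lt_or_ge n (ψ k₁ + 1) with h | h
      · exact le_trans (hD n (by omega)) (le_max_left _ _)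
      · have heq : f^[n - ψ k₁] (f^[ψ k₁] p) = f^[n] p := by
          rw [← Function.iterate_add_apply]
          congr 1
          omega
        have hb : dist (f^[n] p) q ≤ C + 3 := by
          calc dist (f^[n] p) q
              ≤ dist (f^[n] p) (f^[n - ψ k₁] q) + dist (f^[n - ψ k₁] q) q :=
                dist_triangle _ _ _
            _ ≤ dist (f^[ψ k₁] p) q + (C + 1) := by
                refine add_le_add ?_ (hq_orbit _)
                have h5 : dist (f^[n - ψ k₁] (f^[ψ k₁] p)) (f^[n - ψ k₁] q) ≤
                    dist (f^[ψ k₁] p) q := hf.iterate_le _ _ _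
                rw [← heq]
                exact h5
            _ ≤ 1 + (C + 1) := by linarith
            _ ≤ C + 3 := by linarith
        exact le_trans hb (le_max_right _ _)
    apply (Metric.isBounded_closedBall (x := q) (r := max D (C + 3))).subset
    rintro _ ⟨n, rfl⟩
    exact mem_closedBall.mpr (hp_orbit n)
  · -- Case B: arbitrarily long excursions after some 1-return time; contradiction.
    exfalso
    push_neg at hA
    have hB : ∀ L : ℕ, ∃ m : ℕ, dist (f^[m] q) q ≤ 1 ∧
        ∀ l : ℕ, 1 ≤ l → l ≤ L + 1 → 1 < dist (f^[m + l] q) q := by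
      intro L
      obtain ⟨m, hm1, hm2⟩ := hA (L + 1) (by omega)
      refine ⟨m, hm1, fun l hl1 hl2 => ?_⟩
      by_contra hcon
      push_neg at hcon
      have := hm2 (m + l) hcon (by omega)
      omega
    choose m hm1 hm2 using hB
    have humem : ∀ L : ℕ, f^[m L] q ∈ closedBall q 1 :=
      fun L => mem_closedBall.mpr (hm1 L)
    obtain ⟨v, hv, ρ, hρ, hconv⟩ :=
      (isCompact_closedBall q 1).tendsto_subseq humem
    -- the orbit of v never re-enters the open unit ball around q
    have hkey : ∀ l : ℕ, 1 ≤ l → 1 ≤ dist (f^[l] v) q := by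
      intro l hl
      have h1 : Tendsto (fun j => f^[l] (f^[m (ρ j)] q)) atTop (𝓝 (f^[l] v)) :=
        ((hf.continuous.iterate l).tendsto v).comp hconv
      have h2 : Tendsto (fun j => dist (f^[l] (f^[m (ρ j)] q)) q) atTop
          (𝓝 (dist (f^[l] v) q)) := h1.dist tendsto_const_nhds
      refine ge_of_tendsto h2 ?_
      filter_upwards [eventually_atTop.mpr ⟨l, fun j hj => hj⟩] with j hj
      have hlρ : l ≤ ρ j + 1 := by
        have h7 : j ≤ ρ j := hρ.le_apply
        omega
      have heq : f^[l] (f^[m (ρ j)] q) = f^[m (ρ j) + l] q := by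
        rw [← Function.iterate_add_apply]
        congr 1
        omega
      rw [heq]
      exact (hm2 (ρ j) l hl hlρ).le
    -- pick a return point close to v, then a late recurrence time: contradiction
    have hdist0 : Tendsto (fun j => dist (f^[m (ρ j)] q) v) atTop (𝓝 0) := by
      have := tendsto_iff_dist_tendsto_zero.mp hconv
      simpa using this
    obtain ⟨j₀, hj₀⟩ := (Metric.tendsto_atTop.mp
      ((tendsto_iff_dist_tendsto_zero.mpr hdist0 : Tendsto (fun j => f^[m (ρ j)] q) atTop (𝓝 v)))
      (1/4) (by norm_num))
    have hj₀' : dist (f^[m (ρ j₀)] q) v ≤ 1/4 := (hj₀ j₀ le_rfl).le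
    obtain ⟨t, ht1, ht2⟩ := hrec (1/4) (by norm_num) (m (ρ j₀))
    have hl1 : 1 ≤ t - m (ρ j₀) := by omega
    have heq : f^[t - m (ρ j₀)] (f^[m (ρ j₀)] q) = f^[t] q := by
      rw [← Function.iterate_add_apply]
      congr 1
      omega
    have hfinal : dist (f^[t - m (ρ j₀)] v) q ≤ 1/2 := by
      calc dist (f^[t - m (ρ j₀)] v) q
          ≤ dist (f^[t - m (ρ j₀)] v) (f^[t - m (ρ j₀)] (f^[m (ρ j₀)] q))
            + dist (f^[t - m (ρ j₀)] (f^[m (ρ j₀)] q)) q := dist_triangle _ _ _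
        _ ≤ dist v (f^[m (ρ j₀)] q) + dist (f^[t] q) q := by
            exact add_le_add (hf.iterate_le _ _ _) (le_of_eq (by rw [heq]))
        _ ≤ 1/4 + 1/4 := by
            refine add_le_add ?_ ht2
            rw [dist_comm]
            exact hj₀'
        _ = 1/2 := by norm_num
    have := hkey (t - m (ρ j₀)) hl1
    linarith

lemma orbit_bounded_of_orbit_bounded {X : Type*} [MetricSpace X] {f : X → X}
    (hf : Nonexpanding f) {p : X}
    (hp : IsBounded (Set.range fun n : ℕ => f^[n] p)) (u : X) :
    IsBounded (Set.range fun n : ℕ => f^[n] u) := by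
  obtain ⟨R, hR⟩ := hp.subset_closedBall p
  apply (Metric.isBounded_closedBall (x := p) (r := R + dist u p)).subset
  rintro _ ⟨n, rfl⟩
  have h1 : dist (f^[n] p) p ≤ R := mem_closedBall.mp (hR (mem_range_self n))
  have h2 : dist (f^[n] u) (f^[n] p) ≤ dist u p := hf.iterate_le n u p
  rw [mem_closedBall]
  calc dist (f^[n] u) p ≤ dist (f^[n] u) (f^[n] p) + dist (f^[n] p) p := dist_triangle _ _ _
    _ ≤ dist u p + R := add_le_add h2 h1
    _ = R + dist u p := add_comm _ _

lemma orbit_closure_compact {X : Type*} [MetricSpace X] [ProperSpace X] {f : X → X} {u : X}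
    (hb : IsBounded (Set.range fun n : ℕ => f^[n] u)) :
    IsCompact (closure (Set.range fun n : ℕ => f^[n] u)) := by
  obtain ⟨R, hR⟩ := hb.subset_closedBall u
  exact (isCompact_closedBall u R).of_isClosed_subset isClosed_closure
    (closure_minimal hR isClosed_closedBall)

/-- Preimages of limit-retract points under iterates, staying in the limit retract. -/
lemma preimage_in_omega {X : Type*} [MetricSpace X] [ProperSpace X] {f : X → X}
    (hf : Nonexpanding f) {u : X} {φ' : ℕ → ℕ} (hφ' : StrictMono φ') {y : X}
    (hlim : Tendsto (fun k => f^[φ' k] u) atTop (𝓝 y))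
    (hb : IsBounded (Set.range fun n : ℕ => f^[n] u)) (n : ℕ) :
    ∃ y', y' ∈ closure (Set.range fun m : ℕ => f^[m] u) ∧ y' ∈ limitRetract f ∧
      f^[n] y' = y := by
  have hC : IsCompact (closure (Set.range fun m : ℕ => f^[m] u)) := orbit_closure_compact hb
  have hwC : ∀ k : ℕ, f^[φ' (k + n) - n] u ∈ closure (Set.range fun m : ℕ => f^[m] u) :=
    fun k => subset_closure (mem_range_self _)
  obtain ⟨y', hy'C, ρ, hρ, hwρ⟩ := hC.tendsto_subseq hwC
  have hkey : ∀ k : ℕ, f^[n] (f^[φ' (k + n) - n] u) = f^[φ' (k + n)] u := by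
    intro k
    rw [← Function.iterate_add_apply]
    congr 1
    have h3 : n ≤ φ' (k + n) := le_trans (Nat.le_add_left n k) hφ'.le_apply
    omega
  have h1 : Tendsto (fun j => f^[n] (f^[φ' (ρ j + n) - n] u)) atTop (𝓝 (f^[n] y')) :=
    ((hf.continuous.iterate n).tendsto y').comp hwρ
  have h2 : Tendsto (fun j => f^[n] (f^[φ' (ρ j + n) - n] u)) atTop (𝓝 y) := by
    have heq : (fun j => f^[n] (f^[φ' (ρ j + n) - n] u))
        = (fun k => f^[φ' k] u) ∘ (fun j => ρ j + n) := by
      funext j; exact hkey (ρ j)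
    rw [heq]
    exact hlim.comp (tendsto_atTop_mono
      (fun j => le_trans hρ.le_apply (Nat.le_add_right _ n)) tendsto_id)
  refine ⟨y', hy'C, ?_, tendsto_nhds_unique h1 h2⟩
  apply Set.mem_iUnion.mpr
  refine ⟨u, fun j => φ' (ρ j + n) - n, ?_, hwρ⟩
  intro a b hab
  have h4 : n ≤ φ' (ρ a + n) := le_trans (Nat.le_add_left n (ρ a)) hφ'.le_apply
  have h5 : φ' (ρ a + n) < φ' (ρ b + n) := hφ' (Nat.add_lt_add_right (hρ hab) n)
  show φ' (ρ a + n) - n < φ' (ρ b + n) - n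
  omega

lemma omega_mapsTo {X : Type*} [MetricSpace X] {f : X → X} (hf : Nonexpanding f) :
    Set.MapsTo f (limitRetract f) (limitRetract f) := by
  intro y hy
  obtain ⟨u, hu⟩ := Set.mem_iUnion.mp hy
  obtain ⟨φ', hφ', hlim⟩ := hu
  apply Set.mem_iUnion.mpr
  refine ⟨u, fun k => φ' k + 1, fun a b hab => by simpa using hφ' hab, ?_⟩
  have h := (hf.continuous.tendsto y).comp hlim
  simpa [Function.comp_def, Function.iterate_succ_apply'] using h

lemma omega_isometry {X : Type*} [MetricSpace X] [ProperSpace X] {f : X → X}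
    (hf : Nonexpanding f)
    (hall : ∀ u : X, IsBounded (Set.range fun n : ℕ => f^[n] u)) :
    ∀ y ∈ limitRetract f, ∀ z ∈ limitRetract f, dist (f y) (f z) = dist y z := by
  intro y hy z hz
  obtain ⟨u, hu⟩ := Set.mem_iUnion.mp hy
  obtain ⟨φu, hφu, hulim⟩ := hu
  obtain ⟨v, hv⟩ := Set.mem_iUnion.mp hz
  obtain ⟨φv, hφv, hvlim⟩ := hv
  have hCu : IsCompact (closure (Set.range fun m : ℕ => f^[m] u)) :=
    orbit_closure_compact (hall u)
  have hCv : IsCompact (closure (Set.range fun m : ℕ => f^[m] v)) :=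
    orbit_closure_compact (hall v)
  choose Y hYC hYω hYeq using fun n => preimage_in_omega hf hφu hulim (hall u) n
  choose Z hZC hZω hZeq using fun n => preimage_in_omega hf hφv hvlim (hall v) n
  obtain ⟨Y', hY'm, ρ₁, hρ₁, hYlim⟩ := hCu.tendsto_subseq hYC
  obtain ⟨Z', hZ'm, ρ₂, hρ₂, hZlim⟩ := hCv.tendsto_subseq (fun k => hZC (ρ₁ k))
  have hνmono : StrictMono (fun k => ρ₁ (ρ₂ k)) := hρ₁.comp hρ₂
  have hYlim2 : Tendsto (fun k => Y (ρ₁ (ρ₂ k))) atTop (𝓝 Y') := by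
    have := hYlim.comp hρ₂.tendsto_atTop
    simpa [Function.comp_def] using this
  have hZlim2 : Tendsto (fun k => Z (ρ₁ (ρ₂ k))) atTop (𝓝 Z') := by
    simpa [Function.comp_def] using hZlim
  have key : ∀ (W' : X) (W : ℕ → X) (target : X), (∀ m, f^[m] (W m) = target) →
      Tendsto (fun k => W (ρ₁ (ρ₂ k))) atTop (𝓝 W') →
      Tendsto (fun k => f^[ρ₁ (ρ₂ k)] W') atTop (𝓝 target) := by
    intro W' W target hWt hWlim
    rw [tendsto_iff_dist_tendsto_zero]
    have hd : Tendsto (fun k => dist W' (W (ρ₁ (ρ₂ k)))) atTop (𝓝 0) := by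
      have := tendsto_iff_dist_tendsto_zero.mp hWlim
      simpa [dist_comm] using this
    apply squeeze_zero' (Eventually.of_forall fun k => dist_nonneg)
      (Eventually.of_forall ?_) hd
    intro k
    calc dist (f^[ρ₁ (ρ₂ k)] W') target
        = dist (f^[ρ₁ (ρ₂ k)] W') (f^[ρ₁ (ρ₂ k)] (W (ρ₁ (ρ₂ k)))) := by
          rw [hWt (ρ₁ (ρ₂ k))]
      _ ≤ dist W' (W (ρ₁ (ρ₂ k))) := hf.iterate_le _ _ _
  have h1 := key Y' Y y hYeq hYlim2
  have h2 := key Z' Z z hZeq hZlim2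
  have hanti : Antitone (fun m => dist (f^[m] Y') (f^[m] Z')) := by
    apply antitone_nat_of_succ_le
    intro m
    rw [Function.iterate_succ_apply', Function.iterate_succ_apply']
    exact hf _ _
  have hbdd : BddBelow (Set.range fun m => dist (f^[m] Y') (f^[m] Z')) :=
    ⟨0, by rintro _ ⟨m, rfl⟩; exact dist_nonneg⟩
  have hDlim : Tendsto (fun m => dist (f^[m] Y') (f^[m] Z')) atTop
      (𝓝 (⨅ m, dist (f^[m] Y') (f^[m] Z'))) := tendsto_atTop_ciInf hanti hbdd
  have hDν : Tendsto (fun k => dist (f^[ρ₁ (ρ₂ k)] Y') (f^[ρ₁ (ρ₂ k)] Z')) atTop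
      (𝓝 (⨅ m, dist (f^[m] Y') (f^[m] Z'))) := by
    have := hDlim.comp hνmono.tendsto_atTop
    simpa [Function.comp_def] using this
  have hDν1 : Tendsto (fun k => dist (f^[ρ₁ (ρ₂ k) + 1] Y') (f^[ρ₁ (ρ₂ k) + 1] Z')) atTop
      (𝓝 (⨅ m, dist (f^[m] Y') (f^[m] Z'))) := by
    have := hDlim.comp ((tendsto_add_atTop_nat 1).comp hνmono.tendsto_atTop)
    simpa [Function.comp_def] using this
  have e1 : dist y z = ⨅ m, dist (f^[m] Y') (f^[m] Z') :=
    tendsto_nhds_unique (h1.dist h2) hDν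
  have h1' : Tendsto (fun k => f^[ρ₁ (ρ₂ k) + 1] Y') atTop (𝓝 (f y)) := by
    have := (hf.continuous.tendsto y).comp h1
    simpa [Function.comp_def, Function.iterate_succ_apply'] using this
  have h2' : Tendsto (fun k => f^[ρ₁ (ρ₂ k) + 1] Z') atTop (𝓝 (f z)) := by
    have := (hf.continuous.tendsto z).comp h2
    simpa [Function.comp_def, Function.iterate_succ_apply'] using this
  have e2 : dist (f y) (f z) = ⨅ m, dist (f^[m] Y') (f^[m] Z') :=
    tendsto_nhds_unique (h1'.dist h2') hDν1
  rw [e1, e2]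

end AuxNE

/-- **Proposition (non-escaping backward orbits).**
Let `X` be a proper metric space and `f : X → X` non-expanding. If a backward orbit
`(x_n)` of `f` is not escaping, then `f` is elliptic, every `x_n` belongs to the limit
retract `ω_f`, the orbit is relatively compact, `f` restricts to a bijective isometry of
`ω_f`, and `x_n = (f|_{ω_f})^{-n}(x_0)` for all `n` (i.e. `x_n` is the unique point of
`ω_f` mapped to `x_0` by `f^n`). -/
theorem non_escaping_backward_orbit
    {X : Type*} [MetricSpace X] [ProperSpace X]
    (f : X → X) (hf : Nonexpanding f)
    (x : ℕ → X) (hx : IsBackwardOrbit f x) (hne : ¬ Escaping x) :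
    IsElliptic f ∧ (∀ n : ℕ, x n ∈ limitRetract f) ∧
      IsCompact (closure (Set.range x)) ∧
      Set.BijOn f (limitRetract f) (limitRetract f) ∧
      (∀ y ∈ limitRetract f, ∀ z ∈ limitRetract f, dist (f y) (f z) = dist y z) ∧
      (∀ n : ℕ, ∀ y ∈ limitRetract f, f^[n] y = x 0 → y = x n) := by
  classical
  simp only [Escaping] at hne
  push_neg at hne
  obtain ⟨K, hK, hfreq⟩ := hne
  have hfreq' : ∃ᶠ n in Filter.atTop, x n ∈ K := hfreq
  obtain ⟨φ₀, hφ₀, hmem⟩ := Filter.extraction_of_frequently_atTop hfreq'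
  obtain ⟨p, hpK, ψ, hψ, htend⟩ := hK.tendsto_subseq hmem
  have hφ : StrictMono (fun k => φ₀ (ψ k)) := hφ₀.comp hψ
  have hp : Filter.Tendsto (fun k => x (φ₀ (ψ k))) Filter.atTop (nhds p) := by
    simpa [Function.comp_def] using htend
  have happrox := fun i => backward_approx hf hx hφ hp i
  have hq0 : Filter.Tendsto (fun k => f^[φ₀ (ψ k)] p) Filter.atTop (nhds (x 0)) := by
    simpa using happrox 0
  have hpb : Bornology.IsBounded (Set.range fun n : ℕ => f^[n] p) := calka hf hφ hq0
  have hall : ∀ u : X, Bornology.IsBounded (Set.range fun n : ℕ => f^[n] u) :=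
    fun u => orbit_bounded_of_orbit_bounded hf hpb u
  have hmemω : ∀ n : ℕ, x n ∈ limitRetract f :=
    fun n => backward_mem_limitRetract hf hx hφ hp n
  obtain ⟨R, hR⟩ := hpb.subset_closedBall p
  have hxR : Set.range x ⊆ Metric.closedBall p R := by
    rintro _ ⟨i, rfl⟩
    exact Metric.isClosed_closedBall.mem_of_tendsto (happrox i)
      (Filter.Eventually.of_forall fun k => hR (Set.mem_range_self _))
  have hcpt : IsCompact (closure (Set.range x)) :=
    (isCompact_closedBall p R).of_isClosed_subset isClosed_closure
      (closure_minimal hxR Metric.isClosed_closedBall)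
  have hiso := omega_isometry hf hall
  have hmaps := omega_mapsTo (f := f) hf
  have hinj : Set.InjOn f (limitRetract f) := by
    intro a ha b hb hab
    have h := hiso a ha b hb
    rw [hab] at h
    have h0 : dist a b = 0 := by simpa using h.symm
    exact dist_eq_zero.mp h0
  have hsurj : Set.SurjOn f (limitRetract f) (limitRetract f) := by
    intro y hy
    obtain ⟨u, hu⟩ := Set.mem_iUnion.mp hy
    obtain ⟨φ', hφ', hlim⟩ := hu
    obtain ⟨y', _, hy'ω, hy'eq⟩ := preimage_in_omega hf hφ' hlim (hall u) 1
    exact ⟨y', hy'ω, by simpa using hy'eq⟩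
  have hinjiter : ∀ n : ℕ, Set.InjOn (f^[n]) (limitRetract f) := by
    intro n
    induction n with
    | zero => intro a _ b _ h; simpa using h
    | succ n ih =>
      intro a ha b hb h
      rw [Function.iterate_succ_apply, Function.iterate_succ_apply] at h
      exact hinj ha hb (ih (hmaps ha) (hmaps hb) h)
  refine ⟨⟨p, hpb⟩, hmemω, hcpt, ⟨hmaps, hinj, hsurj⟩, hiso, ?_⟩
  intro n y hy hyx
  have hxn : f^[n] (x n) = x 0 := by
    have h := hx.iterate_eq n 0
    simpa using h
  exact hinjiter n hy (hmemω n) (hyx.trans hxn.symm)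
end
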